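/- arXiv:1812.01534 — 4 statements merged into one kernel-verified Lean document; each statement's English description precedes it below -/
import Mathlib

section
/- For all ε > 0 there exists δ > 0 such that every finite triangle-free simple graph G admits a fractional colouring w such that for every v ∈ V(G), w(v) ⊆ [0, (1+ε)·max{deg(v)/log deg(v), δ/log δ}). -/
/-!
Greedy fractional colouring driven by the hard-core model, after Davies, Kang, Pirot and Sereni.
Suppose that on every induced subgraph `G[S]` the hard-core distribution at fugacity `l`
satisfies the local occupancy condition `a v · P(v ∈ I) + b v · E |N(v) ∩ I| ≥ 1`. Colour
greedily: spend time `η` on the independent sets of `G[S]` in proportion to their hard-core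
weights, with `η` as large as possible without exceeding any remaining demand, and recurse on
the vertices whose demand is not yet met. By the occupancy condition each round raises the
bound `a v · y v + b v · ∑_{u ∼ v} y u` (for the remaining demands `y`) of every surviving
vertex `v` by at least the time spent, so the colours of `v` stay below `a v + b v · deg v`.

In a triangle-free graph, once the independent set is fixed outside the closed neighbourhood of
`v`, its trace on `N[v]` is either `{v}` or any subset of the `m ≤ deg v` free neighbours, which
are pairwise non-adjacent. The occupancy condition thus reduces to
`l + (1 + l)^m ≤ a l + b m l (1 + l)^(m - 1)`, which holds for `b = (1 + ε/2) / log d` and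
`a = 1 + d^p / l` with `p < 1`; then `a + b d ≤ (1 + ε) d / log d` for large `d`, and the
small degrees are absorbed into `δ / log δ`.
-/

/-- A finite set of vertices is independent in `G`. -/
def IndepFinset {V : Type*} (G : SimpleGraph V) (s : Finset V) : Prop :=
  ∀ u ∈ s, ∀ v ∈ s, ¬ G.Adj u v

instance {V : Type*} (G : SimpleGraph V) [DecidableRel G.Adj] (s : Finset V) :
    Decidable (IndepFinset G s) :=
  inferInstanceAs (Decidable (∀ u ∈ s, ∀ v ∈ s, ¬ G.Adj u v))

open Finset MeasureTheory Function

theorem Finset.sum_powerset_pow_card {α R : Type*} [CommSemiring R] (s : Finset α) (x : R) :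
    ∑ t ∈ s.powerset, x ^ #t = (1 + x) ^ #s := by
  simpa [add_comm] using sum_pow_mul_eq_add_pow x 1 s

theorem Finset.sum_powerset_card_mul_pow_card {α R : Type*} [CommSemiring R] [DecidableEq α]
    (s : Finset α) (x : R) :
    ∑ t ∈ s.powerset, #t * x ^ #t = #s * x * (1 + x) ^ (#s - 1) := by
  induction s using Finset.induction_on with
  | empty => simp
  | @insert a s ha ih =>
    have hins : ∑ t ∈ s.powerset, (#(insert a t) : R) * x ^ #(insert a t)
        = x * ∑ t ∈ s.powerset, #t * x ^ #t + x * ∑ t ∈ s.powerset, x ^ #t := by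
      rw [mul_sum, mul_sum, ← sum_add_distrib]
      refine sum_congr rfl fun t ht => ?_
      rw [card_insert_of_notMem fun h => ha (mem_powerset.mp ht h)]
      push_cast
      ring
    rw [sum_powerset_insert ha, hins, ih, sum_powerset_pow_card, card_insert_of_notMem ha]
    rcases Nat.eq_zero_or_pos #s with h | h
    · simp [h]
    · obtain ⟨n, hn⟩ := Nat.exists_eq_add_one_of_ne_zero h.ne'
      simp only [hn, Nat.add_sub_cancel, pow_succ]
      push_cast
      ring

theorem Finset.Nonempty.exists_max_mul_le {ι : Type*} {s : Finset ι} (hs : s.Nonempty)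
    {c y : ι → ℝ} (hc : ∀ i ∈ s, 0 < c i) (hy : ∀ i ∈ s, 0 ≤ y i) :
    ∃ i₀ ∈ s, ∃ t, 0 ≤ t ∧ (∀ i ∈ s, t * c i ≤ y i) ∧ t * c i₀ = y i₀ := by
  obtain ⟨i₀, hi₀, hmin⟩ := s.exists_min_image (fun i => y i / c i) hs
  refine ⟨i₀, hi₀, y i₀ / c i₀, div_nonneg (hy i₀ hi₀) (hc i₀ hi₀).le, fun i hi => ?_,
    div_mul_cancel₀ _ (hc i₀ hi₀).ne'⟩
  rw [← le_div_iff₀ (hc i hi)]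
  exact hmin i hi

theorem exists_disjoint_family_Ico_volume_eq {ι : Type*} [DecidableEq ι] (p : ι → ℝ)
    (T : ℝ) (s : Finset ι) (hp : ∀ i ∈ s, 0 ≤ p i) :
    ∃ w : ι → Set ℝ, (∀ i, MeasurableSet (w i)) ∧ Pairwise (Disjoint on w) ∧
      (∀ i, w i ⊆ Set.Ico T (T + ∑ i ∈ s, p i)) ∧ (∀ i ∉ s, w i = ∅) ∧
      ∀ i ∈ s, volume (w i) = ENNReal.ofReal (p i) := by
  induction s using Finset.induction_on with
  | empty =>
    exact ⟨fun _ => ∅, by simp, fun _ _ _ => Set.disjoint_empty _, by simp, by simp, by simp⟩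
  | @insert a s ha ih =>
    obtain ⟨w, hmeas, hdisj, hsub, hempty, hvol⟩ :=
      ih fun i hi => hp i (mem_insert_of_mem hi)
    set L := ∑ i ∈ s, p i
    have hL : 0 ≤ L := sum_nonneg fun i hi => hp i (mem_insert_of_mem hi)
    have hpa : 0 ≤ p a := hp a (mem_insert_self a s)
    have hsum : ∑ i ∈ insert a s, p i = L + p a := by rw [sum_insert ha, add_comm]
    have hsep : ∀ i, Disjoint (w i) (Set.Ico (T + L) (T + L + p a)) := fun i =>
      Set.Ico_disjoint_Ico_same.mono_left (hsub i)
    refine ⟨update w a (Set.Ico (T + L) (T + L + p a)), fun i => ?_, fun i j hij => ?_,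
      fun i => ?_, fun i hi => ?_, fun i hi => ?_⟩ <;> try simp only [onFun, update_apply]
    · split_ifs
      exacts [measurableSet_Ico, hmeas i]
    · split_ifs with hi hj hj
      exacts [absurd (hi.trans hj.symm) hij, (hsep j).symm, hsep i, hdisj hij]
    · rw [hsum]
      split_ifs
      exacts [Set.Ico_subset_Ico (by linarith) (by linarith),
        (hsub i).trans (Set.Ico_subset_Ico_right (by linarith))]
    · rw [mem_insert, not_or] at hi
      simp [hi.1, hempty i hi.2]
    · split_ifs with hia
      · simp [hia, Real.volume_Ico]
      · exact hvol i ((mem_insert.mp hi).resolve_left hia)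

section IndepFinset

variable {V : Type*} {G : SimpleGraph V}

theorem IndepFinset.mono {I J : Finset V} (hI : IndepFinset G I) (hJ : J ⊆ I) :
    IndepFinset G J :=
  fun x hx z hz => hI x (hJ hx) z (hJ hz)

theorem IndepFinset.union [DecidableEq V] {I J : Finset V} (hI : IndepFinset G I)
    (hJ : IndepFinset G J) (hIJ : ∀ i ∈ I, ∀ j ∈ J, ¬ G.Adj i j) : IndepFinset G (I ∪ J) := by
  intro x hx z hz
  rcases mem_union.1 hx with hx | hx <;> rcases mem_union.1 hz with hz | hz
  exacts [hI x hx z hz, hIJ x hx z hz, fun h => hIJ z hz x hx h.symm, hJ x hx z hz]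

theorem indepFinset_singleton (v : V) : IndepFinset G {v} := by
  simp [IndepFinset]

theorem indepFinset_of_subset_neighborFinset [Fintype V] [DecidableEq V] [DecidableRel G.Adj]
    (hG : G.CliqueFree 3) {v : V} {K : Finset V} (hK : K ⊆ G.neighborFinset v) :
    IndepFinset G K := fun x hx z hz hxz =>
  hG _ (SimpleGraph.is3Clique_triple_iff.2
    ⟨(G.mem_neighborFinset v x).1 (hK hx), (G.mem_neighborFinset v z).1 (hK hz), hxz⟩)

end IndepFinset

section HardCore

variable {V : Type*} (G : SimpleGraph V) [DecidableRel G.Adj]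

def indepSubsets (S : Finset V) : Finset (Finset V) := {I ∈ S.powerset | IndepFinset G I}

variable {G}

theorem mem_indepSubsets {S I : Finset V} :
    I ∈ indepSubsets G S ↔ I ⊆ S ∧ IndepFinset G I := by
  simp [indepSubsets]

theorem indepSubsets_mono {S T : Finset V} (h : S ⊆ T) : indepSubsets G S ⊆ indepSubsets G T :=
  fun _ hI => mem_indepSubsets.2 ⟨(mem_indepSubsets.1 hI).1.trans h, (mem_indepSubsets.1 hI).2⟩

theorem empty_mem_indepSubsets (S : Finset V) : ∅ ∈ indepSubsets G S :=
  mem_indepSubsets.2 ⟨empty_subset S, by simp [IndepFinset]⟩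

theorem singleton_mem_indepSubsets {S : Finset V} {v : V} (hv : v ∈ S) :
    {v} ∈ indepSubsets G S :=
  mem_indepSubsets.2 ⟨singleton_subset_iff.2 hv, indepFinset_singleton v⟩

variable (G)

/-- The hard-core model on `G[S]` at fugacity `l` draws an independent set `I` with probability
`l ^ #I / partitionFn G l S`. -/
def partitionFn (l : ℝ) (S : Finset V) : ℝ := ∑ I ∈ indepSubsets G S, l ^ #I

noncomputable def occupancyProb [DecidableEq V] (l : ℝ) (S : Finset V) (v : V) : ℝ :=
  (∑ I ∈ indepSubsets G S with v ∈ I, l ^ #I) / partitionFn G l S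

variable {G} {l : ℝ}

theorem partitionFn_pos (hl : 0 < l) (S : Finset V) : 0 < partitionFn G l S :=
  sum_pos (fun _ _ => pow_pos hl _) ⟨∅, empty_mem_indepSubsets S⟩

theorem occupancyProb_pos [DecidableEq V] (hl : 0 < l) {S : Finset V} {v : V} (hv : v ∈ S) :
    0 < occupancyProb G l S v :=
  div_pos (sum_pos (fun _ _ => pow_pos hl _)
    ⟨{v}, mem_filter.2 ⟨singleton_mem_indepSubsets hv, Finset.mem_singleton_self v⟩⟩)
    (partitionFn_pos hl S)

theorem occupancyProb_nonneg [DecidableEq V] (hl : 0 < l) (S : Finset V) (v : V) :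
    0 ≤ occupancyProb G l S v :=
  div_nonneg (sum_nonneg fun _ _ => (pow_pos hl _).le) (partitionFn_pos hl S).le

theorem occupancyProb_of_notMem [DecidableEq V] {S : Finset V} {v : V} (hv : v ∉ S) :
    occupancyProb G l S v = 0 := by
  rw [occupancyProb, filter_false_of_mem fun _ hI hvI => hv ((mem_indepSubsets.1 hI).1 hvI),
    sum_empty, zero_div]

theorem sum_occupancyProb [DecidableEq V] (l : ℝ) (S A : Finset V) :
    ∑ u ∈ A, occupancyProb G l S u =
      (∑ I ∈ indepSubsets G S, #(A ∩ I) * l ^ #I) / partitionFn G l S := by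
  simp only [occupancyProb, ← sum_div, sum_filter]
  rw [sum_comm]
  congr 1
  refine sum_congr rfl fun I _ => ?_
  rw [sum_ite_mem, sum_const, nsmul_eq_mul]

end HardCore

section LocalCap

variable {V : Type*} [Fintype V] (G : SimpleGraph V) [DecidableRel G.Adj]

def localCap (a b y : V → ℝ) (v : V) : ℝ := a v * y v + b v * ∑ u ∈ G.neighborFinset v, y u

variable {G}

theorem localCap_nonneg {a b y : V → ℝ} (ha : ∀ v, 0 ≤ a v) (hb : ∀ v, 0 ≤ b v)
    (hy : ∀ v, 0 ≤ y v) (v : V) : 0 ≤ localCap G a b y v :=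
  add_nonneg (mul_nonneg (ha v) (hy v)) (mul_nonneg (hb v) (sum_nonneg fun u _ => hy u))

theorem localCap_sub_smul (a b y z : V → ℝ) (η : ℝ) (v : V) :
    localCap G a b (fun u => y u - η * z u) v = localCap G a b y v - η * localCap G a b z v := by
  simp only [localCap, sum_sub_distrib, ← mul_sum]
  ring

end LocalCap

section Colouring

variable {V : Type*} [Fintype V] [DecidableEq V] (G : SimpleGraph V) [DecidableRel G.Adj]

noncomputable def colourMeasure (w : Finset V → Set ℝ) (v : V) : ENNReal :=
  ∑ I : Finset V, if IndepFinset G I ∧ v ∈ I then volume (w I) else 0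

/-- The local occupancy condition: in the hard-core model on every induced subgraph `G[S]`,
each `v ∈ S` satisfies `a v · P(v ∈ I) + b v · E |N(v) ∩ I| ≥ 1`. -/
def LocalOccupancy (l : ℝ) (a b : V → ℝ) : Prop :=
  ∀ S : Finset V, ∀ v ∈ S, 1 ≤ localCap G a b (occupancyProb G l S) v

structure IsDemandColouring (S : Finset V) (a b y : V → ℝ) (T : ℝ) (w : Finset V → Set ℝ) :
    Prop where
  measurableSet : ∀ I, MeasurableSet (w I)
  pairwise_disjoint : Pairwise (Disjoint on w)
  eq_empty : ∀ I ∉ indepSubsets G S, w I = ∅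
  subset_Ici : ∀ I, w I ⊆ Set.Ici T
  subset_Iio : ∀ v I, v ∈ I → w I ⊆ Set.Iio (T + localCap G a b y v)
  le_colourMeasure : ∀ v, ENNReal.ofReal (y v) ≤ colourMeasure G w v

variable {G}

theorem colourMeasure_union {s w : Finset V → Set ℝ} (hsep : ∀ I, Disjoint (s I) (w I))
    (hw : ∀ I, MeasurableSet (w I)) (v : V) :
    colourMeasure G (fun I => s I ∪ w I) v = colourMeasure G s v + colourMeasure G w v := by
  simp only [colourMeasure, ← sum_add_distrib]
  refine sum_congr rfl fun I _ => ?_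
  split_ifs
  exacts [measure_union (hsep I) (hw I), (add_zero 0).symm]

variable {l : ℝ}

theorem exists_hardCore_slices (hl : 0 < l) (S : Finset V) {η : ℝ} (hη : 0 ≤ η) (T : ℝ) :
    ∃ s : Finset V → Set ℝ, (∀ I, MeasurableSet (s I)) ∧ Pairwise (Disjoint on s) ∧
      (∀ I, s I ⊆ Set.Ico T (T + η)) ∧ (∀ I ∉ indepSubsets G S, s I = ∅) ∧
      ∀ v, colourMeasure G s v = ENNReal.ofReal (η * occupancyProb G l S v) := by
  have hZ := partitionFn_pos (G := G) hl S
  have hp : ∀ I ∈ indepSubsets G S, 0 ≤ η * (l ^ #I / partitionFn G l S) :=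
    fun I _ => mul_nonneg hη (div_nonneg (pow_pos hl _).le hZ.le)
  obtain ⟨s, hmeas, hdisj, hsub, hempty, hvol⟩ := exists_disjoint_family_Ico_volume_eq _ T _ hp
  have htotal : ∑ I ∈ indepSubsets G S, η * (l ^ #I / partitionFn G l S) = η := by
    rw [← mul_sum, ← sum_div, ← partitionFn, div_self hZ.ne', mul_one]
  refine ⟨s, hmeas, hdisj, by rwa [htotal] at hsub, hempty, fun v => ?_⟩
  have hterm : ∀ I, (if IndepFinset G I ∧ v ∈ I then volume (s I) else 0) =
      if I ∈ {I ∈ indepSubsets G S | v ∈ I} then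
        ENNReal.ofReal (η * (l ^ #I / partitionFn G l S)) else 0 := by
    intro I
    by_cases hI : I ∈ indepSubsets G S
    · simp [hI, mem_indepSubsets.1 hI, hvol I hI]
    · simp [hI, hempty I hI]
  rw [colourMeasure, sum_congr rfl fun I _ => hterm I, sum_ite_mem, univ_inter,
    ← ENNReal.ofReal_sum_of_nonneg fun I hI => hp I (mem_filter.1 hI).1, ← mul_sum, ← sum_div,
    occupancyProb]

theorem IsDemandColouring.exists_prepend_hardCore (hl : 0 < l) {a b : V → ℝ}
    (ha : ∀ v, 0 ≤ a v) (hb : ∀ v, 0 ≤ b v) (hocc : LocalOccupancy G l a b)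
    {S S' : Finset V} (hS' : S' ⊆ S) {y : V → ℝ} {η T : ℝ} (hη : 0 ≤ η)
    (hy' : ∀ v, 0 ≤ y v - η * occupancyProb G l S v) {w' : Finset V → Set ℝ}
    (hw' : IsDemandColouring G S' a b (fun v => y v - η * occupancyProb G l S v) (T + η) w') :
    ∃ w, IsDemandColouring G S a b y T w := by
  obtain ⟨s, hmeas, hdisj, hsub, hempty, hcov⟩ := exists_hardCore_slices (G := G) hl S hη T
  have hsep : ∀ I J, Disjoint (s I) (w' J) := fun I J =>
    Set.disjoint_of_subset ((hsub I).trans Set.Ico_subset_Iio_self) (hw'.subset_Ici J)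
      (Set.Iio_disjoint_Ici le_rfl)
  have hempty' : ∀ I ∉ indepSubsets G S, s I ∪ w' I = ∅ := fun I hI => by
    rw [hempty I hI, hw'.eq_empty I fun h => hI (indepSubsets_mono hS' h), Set.union_empty]
  refine ⟨fun I => s I ∪ w' I, fun I => (hmeas I).union (hw'.measurableSet I),
    fun I J hIJ => ?_, hempty', fun I => ?_, fun v I hvI => ?_, fun v => ?_⟩
  · exact ((hdisj hIJ).union_right (hsep I J)).union_left
      ((hsep J I).symm.union_right (hw'.pairwise_disjoint hIJ))
  · exact Set.union_subset ((hsub I).trans Set.Ico_subset_Ici_self)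
      ((hw'.subset_Ici I).trans (Set.Ici_subset_Ici.2 (by linarith)))
  · by_cases hI : I ∈ indepSubsets G S
    · have hcap : η + localCap G a b (fun v => y v - η * occupancyProb G l S v) v
          ≤ localCap G a b y v := by
        rw [localCap_sub_smul]
        nlinarith [hocc S v ((mem_indepSubsets.1 hI).1 hvI)]
      have hcap' := localCap_nonneg (G := G) ha hb hy' v
      refine Set.union_subset ((hsub I).trans ?_) ((hw'.subset_Iio v I hvI).trans ?_)
      · exact Set.Ico_subset_Iio_self.trans (Set.Iio_subset_Iio (by linarith))
      · exact Set.Iio_subset_Iio (by linarith)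
    · simp [hempty' I hI]
  · rw [colourMeasure_union (fun I => hsep I I) hw'.measurableSet, hcov]
    calc ENNReal.ofReal (y v)
        = ENNReal.ofReal (η * occupancyProb G l S v)
          + ENNReal.ofReal (y v - η * occupancyProb G l S v) := by
          rw [← ENNReal.ofReal_add (mul_nonneg hη (occupancyProb_nonneg hl S v)) (hy' v),
            add_sub_cancel]
      _ ≤ _ := add_le_add_right (hw'.le_colourMeasure v) _

theorem exists_isDemandColouring (hl : 0 < l) {a b : V → ℝ} (ha : ∀ v, 0 ≤ a v)
    (hb : ∀ v, 0 ≤ b v) (hocc : LocalOccupancy G l a b) (S : Finset V) (y : V → ℝ)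
    (hy : ∀ v, 0 ≤ y v) (hyS : ∀ v ∉ S, y v = 0) (T : ℝ) :
    ∃ w, IsDemandColouring G S a b y T w := by
  induction S using Finset.strongInduction generalizing y T with
  | H S ih =>
  rcases S.eq_empty_or_nonempty with rfl | hS
  · refine ⟨fun _ => ∅, fun _ => MeasurableSet.empty, fun _ _ _ => Set.disjoint_empty _,
      fun _ _ => rfl, fun _ => Set.empty_subset _, fun _ _ _ => Set.empty_subset _, fun v => ?_⟩
    simp [hyS v (notMem_empty v)]
  -- `v₀` is the first vertex whose demand is met by the hard-core slices of `[T, T + η)`.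
  obtain ⟨v₀, hv₀, η, hη, hle, heq⟩ :=
    hS.exists_max_mul_le (fun v hv => occupancyProb_pos (G := G) hl hv) (fun v _ => hy v)
  have hy' : ∀ v, 0 ≤ y v - η * occupancyProb G l S v := fun v => by
    by_cases hv : v ∈ S
    · exact sub_nonneg.2 (hle v hv)
    · simp [hyS v hv, occupancyProb_of_notMem hv]
  have hy'S : ∀ v ∉ S.erase v₀, y v - η * occupancyProb G l S v = 0 := fun v hv => by
    rcases eq_or_ne v v₀ with rfl | hne
    · exact sub_eq_zero.2 heq.symm
    · have hvS : v ∉ S := fun h => hv (mem_erase.2 ⟨hne, h⟩)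
      simp [hyS v hvS, occupancyProb_of_notMem hvS]
  obtain ⟨w', hw'⟩ := ih _ (erase_ssubset hv₀) _ hy' hy'S (T + η)
  exact hw'.exists_prepend_hardCore hl ha hb hocc (erase_subset v₀ S) hη hy'

end Colouring

section Occupancy

variable {V : Type*} [Fintype V] [DecidableEq V] {G : SimpleGraph V} [DecidableRel G.Adj]

variable (G) in
def freeNeighbors (S J : Finset V) (v : V) : Finset V :=
  {u ∈ G.neighborFinset v ∩ S | ∀ j ∈ J, ¬ G.Adj u j}

theorem freeNeighbors_subset {S J : Finset V} {v : V} :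
    freeNeighbors G S J v ⊆ G.neighborFinset v :=
  fun _ hu => (mem_inter.1 (mem_filter.1 hu).1).1

theorem eq_insert_or_eq_union_of_mem_indepSubsets {S I : Finset V} {v : V}
    (hI : I ∈ indepSubsets G S) :
    I = insert v (I \ insert v (G.neighborFinset v)) ∨
      ∃ K ⊆ freeNeighbors G S (I \ insert v (G.neighborFinset v)) v,
        I \ insert v (G.neighborFinset v) ∪ K = I := by
  obtain ⟨hIS, hI⟩ := mem_indepSubsets.1 hI
  by_cases hvI : v ∈ I
  · left
    ext x
    by_cases hxv : x = v
    · simp [hxv, hvI]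
    · have : x ∈ I → ¬ G.Adj v x := hI v hvI x
      simp [hxv, G.mem_neighborFinset]
      tauto
  · right
    refine ⟨I ∩ G.neighborFinset v, fun u hu => ?_, ?_⟩
    · obtain ⟨huI, hvu⟩ := mem_inter.1 hu
      exact mem_filter.2 ⟨mem_inter.2 ⟨hvu, hIS huI⟩, fun j hj => hI u huI j (mem_sdiff.1 hj).1⟩
    · ext x
      by_cases hxv : x = v
      · simp [hxv, hvI]
      · simp [hxv]
        tauto

theorem insert_mem_indepSubsets_and_sdiff_eq {S J : Finset V} {v : V} (hv : v ∈ S)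
    (hJ : J ∈ indepSubsets G (S \ insert v (G.neighborFinset v))) :
    insert v J ∈ indepSubsets G S ∧ insert v J \ insert v (G.neighborFinset v) = J := by
  obtain ⟨hJsub, hJ⟩ := mem_indepSubsets.1 hJ
  have hJv : ∀ j ∈ J, j ≠ v ∧ ¬ G.Adj v j := fun j hj => by
    simpa [not_or] using (mem_sdiff.1 (hJsub hj)).2
  refine ⟨mem_indepSubsets.2 ⟨insert_subset hv (hJsub.trans sdiff_subset), ?_⟩, ?_⟩
  · rw [insert_eq]
    exact (indepFinset_singleton v).union hJ fun i hi j hj => by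
      rw [mem_singleton.1 hi]
      exact (hJv j hj).2
  · ext x
    by_cases hxv : x = v
    · simpa [hxv] using fun h => (hJv v h).1 rfl
    · simpa [hxv] using fun hx => (hJv x hx).2

theorem union_mem_indepSubsets_and_sdiff_eq (hG : G.CliqueFree 3) {S J K : Finset V} {v : V}
    (hJ : J ∈ indepSubsets G (S \ insert v (G.neighborFinset v)))
    (hK : K ⊆ freeNeighbors G S J v) :
    J ∪ K ∈ indepSubsets G S ∧ (J ∪ K) \ insert v (G.neighborFinset v) = J := by
  obtain ⟨hJsub, hJ⟩ := mem_indepSubsets.1 hJ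
  have hKN : K ⊆ G.neighborFinset v := hK.trans freeNeighbors_subset
  refine ⟨mem_indepSubsets.2 ⟨union_subset (hJsub.trans sdiff_subset)
    fun u hu => (mem_inter.1 (mem_filter.1 (hK hu)).1).2, hJ.union
    (indepFinset_of_subset_neighborFinset hG hKN) fun j hj k hk hjk => ?_⟩, ?_⟩
  · exact (mem_filter.1 (hK hk)).2 j hj hjk.symm
  · rw [union_sdiff_distrib, sdiff_eq_empty_iff_subset.2 (hKN.trans (subset_insert _ _)),
      union_empty, sdiff_eq_self_of_disjoint (disjoint_sdiff_self_left.mono_left hJsub)]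

theorem filter_sdiff_closedNeighborhood_eq (hG : G.CliqueFree 3) {S J : Finset V} {v : V}
    (hv : v ∈ S) (hJ : J ∈ indepSubsets G (S \ insert v (G.neighborFinset v))) :
    {I ∈ indepSubsets G S | I \ insert v (G.neighborFinset v) = J} =
      insert (insert v J) ((freeNeighbors G S J v).powerset.image (J ∪ ·)) := by
  ext I
  simp only [mem_filter, mem_insert, mem_image, mem_powerset]
  constructor
  · rintro ⟨hI, rfl⟩
    exact eq_insert_or_eq_union_of_mem_indepSubsets hI
  · rintro (rfl | ⟨K, hK, rfl⟩)
    exacts [insert_mem_indepSubsets_and_sdiff_eq hv hJ,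
      union_mem_indepSubsets_and_sdiff_eq hG hJ hK]

theorem sum_filter_sdiff_closedNeighborhood {R : Type*} [AddCommMonoid R] (hG : G.CliqueFree 3)
    {S J : Finset V} {v : V} (hv : v ∈ S)
    (hJ : J ∈ indepSubsets G (S \ insert v (G.neighborFinset v))) (F : Finset V → R) :
    ∑ I ∈ indepSubsets G S with I \ insert v (G.neighborFinset v) = J, F I =
      F (insert v J) + ∑ K ∈ (freeNeighbors G S J v).powerset, F (J ∪ K) := by
  have hJN : Disjoint J (insert v (G.neighborFinset v)) :=
    disjoint_sdiff_self_left.mono_left (mem_indepSubsets.1 hJ).1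
  have hJK : ∀ K ∈ (freeNeighbors G S J v).powerset, Disjoint J K := fun K hK =>
    hJN.mono_right ((mem_powerset.1 hK).trans (freeNeighbors_subset.trans (subset_insert _ _)))
  rw [filter_sdiff_closedNeighborhood_eq hG hv hJ, sum_insert, sum_image]
  · intro K hK K' hK' h
    simpa [union_sdiff_cancel_left (hJK K hK), union_sdiff_cancel_left (hJK K' hK')] using
      congrArg (· \ J) h
  · simp only [mem_image, not_exists, not_and]
    intro K hK h
    rcases mem_union.1 (h ▸ mem_insert_self v J) with hvJ | hvK
    · exact disjoint_left.1 hJN hvJ (mem_insert_self _ _)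
    · exact G.loopless.irrefl v ((G.mem_neighborFinset v v).1
        (freeNeighbors_subset (mem_powerset.1 hK hvK)))

variable {l : ℝ}

theorem sum_fiber_pow_card_le (hG : G.CliqueFree 3) (hl : 0 < l) {a b : ℝ} {S J : Finset V}
    {v : V} (hv : v ∈ S) (hJ : J ∈ indepSubsets G (S \ insert v (G.neighborFinset v)))
    (hab : ∀ m ≤ G.degree v, l + (1 + l) ^ m ≤ a * l + b * (m * l * (1 + l) ^ (m - 1))) :
    ∑ I ∈ indepSubsets G S with I \ insert v (G.neighborFinset v) = J, l ^ #I ≤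
      ∑ I ∈ indepSubsets G S with I \ insert v (G.neighborFinset v) = J,
        (a * #({v} ∩ I) + b * #(G.neighborFinset v ∩ I)) * l ^ #I := by
  have hJN : Disjoint J (insert v (G.neighborFinset v)) :=
    disjoint_sdiff_self_left.mono_left (mem_indepSubsets.1 hJ).1
  have hvJ : v ∉ J := fun h => disjoint_left.1 hJN h (mem_insert_self _ _)
  have hvN : v ∉ G.neighborFinset v := fun h =>
    G.loopless.irrefl v ((G.mem_neighborFinset v v).1 h)
  have hNJ : Disjoint (G.neighborFinset v) J := (hJN.mono_right (subset_insert _ _)).symm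
  set F := freeNeighbors G S J v
  have hKN : ∀ K ∈ F.powerset, K ⊆ G.neighborFinset v := fun K hK =>
    (mem_powerset.1 hK).trans freeNeighbors_subset
  have hcard : ∀ K ∈ F.powerset, #(J ∪ K) = #J + #K := fun K hK =>
    card_union_of_disjoint (hNJ.mono_left (hKN K hK)).symm
  have hL : ∑ K ∈ F.powerset, l ^ #(J ∪ K) = l ^ #J * (1 + l) ^ #F := by
    rw [sum_congr rfl fun K hK => by rw [hcard K hK, pow_add], ← mul_sum, sum_powerset_pow_card]
  have hR : ∑ K ∈ F.powerset,
      (a * #({v} ∩ (J ∪ K)) + b * #(G.neighborFinset v ∩ (J ∪ K))) * l ^ #(J ∪ K)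
        = b * (l ^ #J * (#F * l * (1 + l) ^ (#F - 1))) := by
    rw [← sum_powerset_card_mul_pow_card, mul_sum, mul_sum]
    refine sum_congr rfl fun K hK => ?_
    have hv : {v} ∩ (J ∪ K) = ∅ := singleton_inter_of_notMem fun h =>
      (mem_union.1 h).elim hvJ fun h => hvN (hKN K hK h)
    have hN : G.neighborFinset v ∩ (J ∪ K) = K := by
      rw [inter_union_distrib_left, disjoint_iff_inter_eq_empty.1 hNJ, empty_union,
        inter_eq_right.2 (hKN K hK)]
    rw [hv, hN, hcard K hK, pow_add, card_empty, Nat.cast_zero]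
    ring
  have hvv : #({v} ∩ insert v J) = 1 := by simp [hvJ]
  have hNv : #(G.neighborFinset v ∩ insert v J) = 0 := by
    simpa [hvN] using disjoint_iff_inter_eq_empty.1 hNJ
  have hm : #F ≤ G.degree v :=
    (card_le_card freeNeighbors_subset).trans (G.card_neighborFinset_eq_degree v).le
  rw [sum_filter_sdiff_closedNeighborhood hG hv hJ, sum_filter_sdiff_closedNeighborhood hG hv hJ,
    hL, hR, hvv, hNv, card_insert_of_notMem hvJ]
  push_cast
  linear_combination mul_le_mul_of_nonneg_left (hab _ hm) (pow_pos hl #J).le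

theorem localOccupancy_of_cliqueFree (hG : G.CliqueFree 3) (hl : 0 < l) {a b : V → ℝ}
    (hab : ∀ v, ∀ m ≤ G.degree v,
      l + (1 + l) ^ m ≤ a v * l + b v * (m * l * (1 + l) ^ (m - 1))) :
    LocalOccupancy G l a b := by
  intro S v hv
  have hmaps : ∀ I ∈ indepSubsets G S, I \ insert v (G.neighborFinset v) ∈
      indepSubsets G (S \ insert v (G.neighborFinset v)) := fun I hI =>
    mem_indepSubsets.2 ⟨sdiff_subset_sdiff (mem_indepSubsets.1 hI).1 subset_rfl,
      (mem_indepSubsets.1 hI).2.mono sdiff_subset⟩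
  have key : partitionFn G l S ≤ ∑ I ∈ indepSubsets G S,
      (a v * #({v} ∩ I) + b v * #(G.neighborFinset v ∩ I)) * l ^ #I := by
    rw [partitionFn, ← sum_fiberwise_of_maps_to hmaps, ← sum_fiberwise_of_maps_to hmaps]
    exact sum_le_sum fun J hJ => sum_fiber_pow_card_le hG hl hv hJ (hab v)
  rw [localCap, ← sum_singleton (occupancyProb G l S) v, sum_occupancyProb, sum_occupancyProb,
    mul_div_assoc', mul_div_assoc', ← add_div, le_div_iff₀ (partitionFn_pos hl S),
    one_mul, mul_sum, mul_sum, ← sum_add_distrib]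
  simpa only [add_mul, mul_assoc] using key

end Occupancy

open Real Filter Asymptotics

theorem one_add_pow_le_exp_add {l B : ℝ} (hl : 0 < l) (hB : 0 < B) (m : ℕ) :
    (1 + l) ^ m ≤ exp ((1 + l) / B) + B * (m * l * (1 + l) ^ (m - 1)) := by
  by_cases hm : 1 + l ≤ B * (m * l)
  · obtain ⟨n, rfl⟩ : ∃ n, m = n + 1 :=
      Nat.exists_eq_add_one.2 (Nat.pos_of_ne_zero fun h => by simp [h] at hm; linarith)
    have := mul_le_mul_of_nonneg_right hm (pow_pos (by linarith : 0 < 1 + l) n).le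
    rw [Nat.add_sub_cancel, pow_succ]
    nlinarith [exp_pos ((1 + l) / B)]
  · have hml : m * l ≤ (1 + l) / B := by rw [le_div_iff₀ hB]; linarith
    calc (1 + l) ^ m ≤ exp l ^ m := by
          gcongr
          linarith [add_one_le_exp l]
      _ = exp (m * l) := by rw [← exp_nat_mul]
      _ ≤ exp ((1 + l) / B) := exp_le_exp.2 hml
      _ ≤ _ := le_add_of_nonneg_right (by positivity)

theorem add_one_add_pow_le_of_one_lt {l γ x : ℝ} (hl : 0 < l) (hγ : 0 < 1 + γ) (hx : 1 < x)
    (m : ℕ) :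
    l + (1 + l) ^ m ≤ (1 + x ^ ((1 + l) / (1 + γ)) / l) * l
      + (1 + γ) / log x * (m * l * (1 + l) ^ (m - 1)) := by
  have h := one_add_pow_le_exp_add hl (div_pos hγ (log_pos hx)) m
  rw [div_div_eq_mul_div, mul_comm, mul_div_assoc, ← rpow_def_of_pos (by linarith)] at h
  rw [add_mul, one_mul, div_mul_cancel₀ _ hl.ne']
  linarith

theorem isLittleO_log_mul_one_add_rpow {l p : ℝ} (hp : p < 1) :
    (fun x => log x * (1 + x ^ p / l)) =o[atTop] id := by
  have hpow : (fun x => log x * x ^ p) =o[atTop] id := by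
    refine ((isLittleO_log_rpow_atTop (sub_pos.2 hp)).mul_isBigO
      (isBigO_refl (fun x : ℝ => x ^ p) atTop)).congr' EventuallyEq.rfl ?_
    filter_upwards [eventually_gt_atTop 0] with x hx
    rw [← rpow_add hx, sub_add_cancel, rpow_one, id]
  exact (isLittleO_log_id_atTop.add (hpow.const_mul_left l⁻¹)).congr_left fun x => by ring

theorem eventually_one_add_rpow_div_add_le {l p γ κ : ℝ} (hl : 0 < l) (hp : p < 1)
    (hκ : 0 < κ) :
    ∀ᶠ x : ℝ in atTop, 1 + x ^ p / l + (1 + γ) / log x * x ≤ (1 + γ + κ) * (x / log x) := by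
  filter_upwards [(isLittleO_log_mul_one_add_rpow (l := l) hp).bound hκ, eventually_gt_atTop 1]
    with x hx hx1
  have hlog := log_pos hx1
  have hpow : 0 ≤ x ^ p / l := div_nonneg (rpow_nonneg (by linarith) p) hl.le
  rw [norm_mul, Real.norm_of_nonneg hlog.le, id, Real.norm_of_nonneg (by linarith),
    Real.norm_of_nonneg (by linarith), mul_comm, ← le_div_iff₀ hlog, mul_div_assoc] at hx
  rw [div_mul_eq_mul_div, mul_div_assoc]
  linarith

theorem exists_le_div_log (A : ℝ) : ∃ δ > 0, A ≤ δ / log δ := by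
  obtain ⟨x, hx, hx1⟩ := ((isLittleO_log_id_atTop.bound (c := 1 / (|A| + 1)) (by positivity)).and
    (eventually_gt_atTop 1)).exists
  have hlog := log_pos hx1
  rw [Real.norm_of_nonneg hlog.le, id, Real.norm_of_nonneg (by linarith), div_mul_eq_mul_div,
    one_mul, le_div_iff₀ (by positivity)] at hx
  refine ⟨x, by linarith, (le_abs_self A).trans ?_⟩
  rw [le_div_iff₀ hlog]
  nlinarith [abs_nonneg A]

theorem exists_degree_weights {ε : ℝ} (hε : 0 < ε) :
    ∃ l > 0, ∃ δ > 0, ∃ a b : ℕ → ℝ, (∀ d, 0 ≤ a d) ∧ (∀ d, 0 ≤ b d) ∧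
      (∀ d, ∀ m ≤ d, l + (1 + l) ^ m ≤ a d * l + b d * (m * l * (1 + l) ^ (m - 1))) ∧
      ∀ d : ℕ, a d + b d * d ≤ (1 + ε) * max (d / log d) (δ / log δ) := by
  set l := ε / 4
  set γ := ε / 2
  set p := (1 + l) / (1 + γ)
  have hl : 0 < l := by positivity
  have hγ : 0 < γ := by positivity
  have hp : p < 1 := (div_lt_one (by positivity)).2 (by simp only [l, γ]; linarith)
  obtain ⟨D, hD⟩ := eventually_atTop.1 <| tendsto_natCast_atTop_atTop.eventually <|
    (eventually_one_add_rpow_div_add_le (γ := γ) hl hp hγ).and (eventually_gt_atTop 1)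
  set A := 1 + (1 + l) ^ D / l
  obtain ⟨δ, hδ, hAδ⟩ := exists_le_div_log A
  have hA : 1 ≤ A := le_add_of_nonneg_right (by positivity)
  refine ⟨l, hl, δ, hδ, fun d => if d < D then A else 1 + d ^ p / l,
    fun d => if d < D then 0 else (1 + γ) / log d, fun d => ?_, fun d => ?_, fun d m hm => ?_,
    fun d => ?_⟩ <;> by_cases hd : d < D <;> simp only [hd, if_true, if_false]
  · linarith
  · positivity
  · exact le_rfl
  · have := log_natCast_nonneg d
    positivity
  · have : (1 + l) ^ m ≤ (1 + l) ^ D := pow_le_pow_right₀ (by linarith) (by omega)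
    rw [zero_mul, add_zero, add_mul, one_mul, div_mul_cancel₀ _ hl.ne']
    linarith
  · exact add_one_add_pow_le_of_one_lt hl (by linarith) (hD d (not_lt.1 hd)).2 m
  · have hmax := le_max_right ((d : ℝ) / log d) (δ / log δ)
    calc A + 0 * d ≤ max (d / log d) (δ / log δ) := by linarith
      _ ≤ _ := le_mul_of_one_le_left (by linarith) (by linarith)
  · calc _ ≤ (1 + γ + γ) * (d / log d) := (hD d (not_lt.1 hd)).1
      _ = (1 + ε) * (d / log d) := by simp only [γ]; ring
      _ ≤ _ := mul_le_mul_of_nonneg_left (le_max_left _ _) (by linarith)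

/-- Local fractional Molloy theorem (Theorem 2 of the paper): for every `ε > 0` there is
`δ > 0` such that every finite triangle-free graph `G` admits a fractional colouring `w`
(pairwise disjoint measurable sets assigned to independent sets, giving total weight at
least `1` to each vertex) with
`w(v) ⊆ [0, (1+ε)·max(deg(v)/log deg(v), δ/log δ))` for every vertex `v`. -/
theorem local_fractional_molloy (ε : ℝ) (hε : 0 < ε) :
    ∃ δ : ℝ, 0 < δ ∧
      ∀ (V : Type) [Fintype V] [DecidableEq V] (G : SimpleGraph V) [DecidableRel G.Adj],
        G.CliqueFree 3 →
        ∃ w : Finset V → Set ℝ,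
          (∀ I : Finset V, IndepFinset G I → MeasurableSet (w I)) ∧
          (∀ I J : Finset V, IndepFinset G I → IndepFinset G J → I ≠ J →
            Disjoint (w I) (w J)) ∧
          (∀ v : V,
            1 ≤ ∑ I : Finset V,
              if IndepFinset G I ∧ v ∈ I then MeasureTheory.volume (w I) else 0) ∧
          (∀ v : V, ∀ I : Finset V, IndepFinset G I → v ∈ I →
            w I ⊆ Set.Ico (0 : ℝ)
              ((1 + ε) * max ((G.degree v : ℝ) / Real.log (G.degree v))
                  (δ / Real.log δ))) := by
  obtain ⟨l, hl, δ, hδ, a, b, ha, hb, hab, hcap⟩ := exists_degree_weights hε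
  refine ⟨δ, hδ, fun V _ _ G _ hG => ?_⟩
  obtain ⟨w, hw⟩ := exists_isDemandColouring hl (fun v => ha (G.degree v))
    (fun v => hb (G.degree v)) (localOccupancy_of_cliqueFree hG hl fun v => hab (G.degree v))
    univ 1 (fun _ => zero_le_one) (fun v hv => absurd (mem_univ v) hv) 0
  refine ⟨w, fun I _ => hw.measurableSet I, fun I J _ _ hIJ => hw.pairwise_disjoint hIJ,
    fun v => by simpa [colourMeasure] using hw.le_colourMeasure v,
    fun v I _ hvI x hx => ⟨hw.subset_Ici I hx, ?_⟩⟩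
  calc x < 0 + localCap G _ _ 1 v := hw.subset_Iio v I hvI hx
    _ = a (G.degree v) + b (G.degree v) * G.degree v := by
      simp [localCap, G.card_neighborFinset_eq_degree]
    _ ≤ _ := hcap _
end

section
/- Let G be a finite triangle-free simple graph and let (α_v)_{v∈V(G)} and (β_v)_{v∈V(G)} be families of positive real numbers. Let λ > 0 and let 𝐈 be a random independent set drawn from the hard-core model on G at fugacity λ. Then for every v ∈ V(G), α_v·Pr(v ∈ 𝐈) + β_v·𝔼|N(v) ∩ 𝐈| ≥ β_v·λ·(log(α_v/β_v) + log log(1+λ) + 1) / ((1+λ)·log(1+λ)). -/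
/-- The probability that the hard-core model on `G` at fugacity `lam` produces the set
`I`: it is `lam^|I| / Z_G(lam)` if `I` is independent, and `0` otherwise. -/
noncomputable def hcProb {V : Type*} [Fintype V] (G : SimpleGraph V) [DecidableRel G.Adj]
    (lam : ℝ) (I : Finset V) : ℝ :=
  (if IndepFinset G I then lam ^ I.card else 0) /
    ∑ J : Finset V, if IndepFinset G J then lam ^ J.card else 0

open Finset

section Analytic

noncomputable def hardCoreLocalBound (a b lam : ℝ) : ℝ :=
  b * lam * (Real.log (a / b) + Real.log (Real.log (1 + lam)) + 1) /
    ((1 + lam) * Real.log (1 + lam))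

lemma log_add_one_mul_add_le {c t lam : ℝ} (hc : 0 < c) (ht : 0 < t) (hlam : 0 ≤ lam) :
    (Real.log c + 1) * (lam + t) ≤ c * (1 + lam) + t * Real.log t := by
  have hc' : Real.log c + 1 ≤ c := by linarith [Real.log_le_sub_one_of_pos hc]
  have hct : Real.log c - Real.log t ≤ c / t - 1 := by
    rw [← Real.log_div hc.ne' ht.ne']; exact Real.log_le_sub_one_of_pos (div_pos hc ht)
  have hct' : t * (Real.log c - Real.log t) ≤ c - t := by
    calc t * (Real.log c - Real.log t) ≤ t * (c / t - 1) := mul_le_mul_of_nonneg_left hct ht.le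
      _ = c - t := by field_simp
  nlinarith [mul_le_mul_of_nonneg_right hc' hlam]

lemma hardCoreLocalBound_mul_add_le {a b lam t : ℝ} (ha : 0 < a) (hb : 0 < b) (hlam : 0 < lam)
    (ht : 0 < t) :
    hardCoreLocalBound a b lam * (lam + t) ≤
      a * lam + b * lam * (t * Real.log t) / ((1 + lam) * Real.log (1 + lam)) := by
  have hL : 0 < Real.log (1 + lam) := Real.log_pos (by linarith)
  have hc : 0 < a * Real.log (1 + lam) / b := by positivity
  have hlog : Real.log (a / b) + Real.log (Real.log (1 + lam)) =
      Real.log (a * Real.log (1 + lam) / b) := by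
    rw [← Real.log_mul (div_pos ha hb).ne' hL.ne', div_mul_eq_mul_div]
  have key := log_add_one_mul_add_le hc ht hlam.le
  rw [hardCoreLocalBound, hlog, div_mul_eq_mul_div, div_le_iff₀ (by positivity)]
  have hscale : 0 ≤ b * lam := by positivity
  calc b * lam * (Real.log (a * Real.log (1 + lam) / b) + 1) * (lam + t)
      = b * lam * ((Real.log (a * Real.log (1 + lam) / b) + 1) * (lam + t)) := by ring
    _ ≤ b * lam * (a * Real.log (1 + lam) / b * (1 + lam) + t * Real.log t) :=
        mul_le_mul_of_nonneg_left key hscale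
    _ = _ := by field_simp

end Analytic

section PowersetSums

variable {α : Type*}

lemma sum_powerset_pow_card (F : Finset α) (x : ℝ) :
    ∑ S ∈ F.powerset, x ^ S.card = (1 + x) ^ F.card := by
  simpa [add_comm] using sum_pow_mul_eq_add_pow x 1 F

lemma sum_powerset_pow_card_mul_card [DecidableEq α] (F : Finset α) (x : ℝ) :
    (∑ S ∈ F.powerset, x ^ S.card * S.card) * (1 + x) = F.card * x * (1 + x) ^ F.card := by
  induction F using Finset.induction with
  | empty => simp
  | @insert a F ha ih =>
    have hins : ∀ S ∈ F.powerset, x ^ (insert a S).card * ((insert a S).card : ℝ) =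
        x * (x ^ S.card * S.card) + x * x ^ S.card := by
      intro S hS
      rw [card_insert_of_notMem fun h => ha (mem_powerset.mp hS h)]
      push_cast
      ring
    rw [sum_powerset_insert ha, sum_congr rfl hins, sum_add_distrib, ← mul_sum, ← mul_sum,
      sum_powerset_pow_card, card_insert_of_notMem ha]
    push_cast
    linear_combination (1 + x) * ih

lemma hardCoreLocalBound_mul_le_sum_powerset {a b lam : ℝ} (ha : 0 < a) (hb : 0 < b)
    (hlam : 0 < lam) (F : Finset α) :
    hardCoreLocalBound a b lam * (lam + ∑ S ∈ F.powerset, lam ^ S.card) ≤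
      a * lam + b * ∑ S ∈ F.powerset, lam ^ S.card * S.card := by
  classical
  have hL : 0 < Real.log (1 + lam) := Real.log_pos (by linarith)
  have hmoment : b * ∑ S ∈ F.powerset, lam ^ S.card * S.card =
      b * lam * ((1 + lam) ^ F.card * Real.log ((1 + lam) ^ F.card)) /
        ((1 + lam) * Real.log (1 + lam)) := by
    rw [Real.log_pow, eq_div_iff (by positivity)]
    linear_combination b * Real.log (1 + lam) * sum_powerset_pow_card_mul_card F lam
  rw [sum_powerset_pow_card, hmoment]
  exact hardCoreLocalBound_mul_add_le ha hb hlam (by positivity)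

end PowersetSums

section HardCoreModel

variable {V : Type*} (G : SimpleGraph V) [DecidableRel G.Adj]

def hcWeight (lam : ℝ) (I : Finset V) : ℝ :=
  if IndepFinset G I then lam ^ I.card else 0

variable [Fintype V]

lemma one_le_sum_hcWeight {lam : ℝ} (hlam : 0 ≤ lam) : 1 ≤ ∑ I, hcWeight G lam I := by
  have hnonneg : ∀ I ∈ (univ : Finset (Finset V)), 0 ≤ hcWeight G lam I := fun I _ => by
    unfold hcWeight; split <;> positivity
  have hempty : hcWeight G lam ∅ = 1 := by simp [hcWeight, IndepFinset]
  simpa [hempty] using single_le_sum hnonneg (mem_univ ∅)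

lemma sum_hcProb_mul (lam : ℝ) (f : Finset V → ℝ) :
    ∑ I, hcProb G lam I * f I = (∑ I, hcWeight G lam I * f I) / ∑ I, hcWeight G lam I := by
  rw [sum_div]
  exact sum_congr rfl fun I _ => div_mul_eq_mul_div _ _ _

lemma sum_hcProb {lam : ℝ} (hlam : 0 ≤ lam) : ∑ I, hcProb G lam I = 1 := by
  have h := sum_hcProb_mul G lam fun _ => 1
  simp only [mul_one] at h
  rw [h, div_self (by linarith [one_le_sum_hcWeight G hlam])]

lemma le_sum_hcProb_mul_of_nonneg {lam : ℝ} (hlam : 0 ≤ lam) {g : Finset V → ℝ} {B : ℝ}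
    (h : 0 ≤ ∑ I, hcWeight G lam I * (g I - B)) : B ≤ ∑ I, hcProb G lam I * g I := by
  have hprob : 0 ≤ ∑ I, hcProb G lam I * (g I - B) := by
    rw [sum_hcProb_mul]
    exact div_nonneg h (zero_le_one.trans (one_le_sum_hcWeight G hlam))
  rwa [sum_congr rfl fun I _ => mul_sub (hcProb G lam I) (g I) B, sum_sub_distrib, ← sum_mul,
    sum_hcProb G hlam, one_mul, sub_nonneg] at hprob

end HardCoreModel

section NeighbourhoodDecomposition

variable {V : Type*} [Fintype V] [DecidableEq V] (G : SimpleGraph V) [DecidableRel G.Adj]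

def uncoveredNeighborFinset (v : V) (J : Finset V) : Finset V :=
  {u ∈ G.neighborFinset v | ∀ w ∈ J, ¬ G.Adj u w}

variable {G}

lemma IndepFinset.insert_of_disjoint {v : V} {J : Finset V} (hJ : IndepFinset G J)
    (hd : Disjoint J (G.neighborFinset v)) : IndepFinset G (insert v J) := by
  have hvJ : ∀ w ∈ J, ¬ G.Adj v w := fun w hw hvw =>
    disjoint_left.mp hd hw ((G.mem_neighborFinset v w).mpr hvw)
  intro u hu w hw
  rcases mem_insert.mp hu with rfl | huJ <;> rcases mem_insert.mp hw with rfl | hwJ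
  · exact G.irrefl
  · exact hvJ w hwJ
  · exact fun h => hvJ u huJ h.symm
  · exact hJ u huJ w hwJ

lemma IndepFinset.union_of_subset_uncovered (hG : G.CliqueFree 3) {v : V} {J S : Finset V}
    (hJ : IndepFinset G J) (hS : S ⊆ uncoveredNeighborFinset G v J) :
    IndepFinset G (J ∪ S) := by
  have hSN : ∀ u ∈ S, G.Adj v u := fun u hu =>
    (G.mem_neighborFinset v u).mp (mem_filter.mp (hS hu)).1
  have hSJ : ∀ u ∈ S, ∀ w ∈ J, ¬ G.Adj u w := fun u hu => (mem_filter.mp (hS hu)).2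
  intro u hu w hw
  rcases mem_union.mp hu with hu | hu <;> rcases mem_union.mp hw with hw | hw
  · exact hJ u hu w hw
  · exact fun h => hSJ w hw u hu h.symm
  · exact hSJ u hu w hw
  · exact fun h => hG {v, u, w} (SimpleGraph.is3Clique_triple_iff.mpr ⟨hSN u hu, hSN w hw, h⟩)

lemma filter_indepFinset_sdiff_eq (hG : G.CliqueFree 3) {v : V} {J : Finset V}
    (hJ : IndepFinset G J) (hd : Disjoint J (insert v (G.neighborFinset v))) :
    ({I | IndepFinset G I ∧ I \ insert v (G.neighborFinset v) = J} : Finset (Finset V)) =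
      insert (insert v J) ((uncoveredNeighborFinset G v J).powerset.image (J ∪ ·)) := by
  ext I
  simp only [mem_filter, mem_univ, true_and, mem_insert, mem_image, mem_powerset]
  constructor
  · rintro ⟨hI, rfl⟩
    by_cases hv : v ∈ I
    · left
      ext u
      have := hI v hv u
      simp only [mem_insert, mem_sdiff, SimpleGraph.mem_neighborFinset]
      grind
    · right
      refine ⟨{u ∈ I | G.Adj v u}, fun u hu => ?_, ?_⟩
      · simp only [mem_filter, uncoveredNeighborFinset, SimpleGraph.mem_neighborFinset,
          mem_sdiff] at hu ⊢
        exact ⟨hu.2, fun w hw => hI u hu.1 w hw.1⟩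
      · ext u
        simp only [mem_union, mem_filter, mem_sdiff, mem_insert, SimpleGraph.mem_neighborFinset]
        grind
  · have hdN : Disjoint J (G.neighborFinset v) := hd.mono_right (subset_insert _ _)
    rintro (rfl | ⟨S, hS, rfl⟩)
    · refine ⟨hJ.insert_of_disjoint hdN, ?_⟩
      rw [insert_sdiff_of_mem _ (mem_insert_self _ _), sdiff_eq_self_of_disjoint hd]
    · refine ⟨hJ.union_of_subset_uncovered hG hS, ?_⟩
      have hSN : S ⊆ insert v (G.neighborFinset v) :=
        (hS.trans (filter_subset _ _)).trans (subset_insert _ _)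
      rw [union_sdiff_distrib, sdiff_eq_self_of_disjoint hd, sdiff_eq_empty_iff_subset.mpr hSN,
        union_empty]

lemma sum_filter_indepFinset_sdiff_eq {M : Type*} [AddCommMonoid M] (hG : G.CliqueFree 3)
    {v : V} {J : Finset V} (hJ : IndepFinset G J)
    (hd : Disjoint J (insert v (G.neighborFinset v))) (g : Finset V → M) :
    ∑ I ∈ ({I | IndepFinset G I ∧ I \ insert v (G.neighborFinset v) = J} :
        Finset (Finset V)), g I =
      g (insert v J) + ∑ S ∈ (uncoveredNeighborFinset G v J).powerset, g (J ∪ S) := by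
  have hSN : ∀ S ∈ (uncoveredNeighborFinset G v J).powerset, S ⊆ G.neighborFinset v :=
    fun S hS => (mem_powerset.mp hS).trans (filter_subset _ _)
  have hdS : ∀ S ∈ (uncoveredNeighborFinset G v J).powerset, Disjoint J S :=
    fun S hS => (hd.mono_right (subset_insert _ _)).mono_right (hSN S hS)
  have hvS : insert v J ∉ (uncoveredNeighborFinset G v J).powerset.image (J ∪ ·) := by
    simp only [mem_image, not_exists, not_and]
    intro S hS hJS
    have hv : v ∈ J ∪ S := hJS ▸ mem_insert_self v J
    rcases mem_union.mp hv with hvJ | hvS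
    · exact disjoint_left.mp hd hvJ (mem_insert_self _ _)
    · exact G.irrefl ((G.mem_neighborFinset v v).mp (hSN S hS hvS))
  have hinj : Set.InjOn (J ∪ ·) (uncoveredNeighborFinset G v J).powerset := by
    intro S₁ h₁ S₂ h₂ h
    rw [← union_sdiff_cancel_left (hdS S₁ h₁), ← union_sdiff_cancel_left (hdS S₂ h₂)]
    exact congrArg (· \ J) h
  rw [filter_indepFinset_sdiff_eq hG hJ hd, sum_insert hvS, sum_image hinj]

lemma sum_hcWeight_mul_eq (hG : G.CliqueFree 3) (v : V) (lam : ℝ) (f : Finset V → ℝ) :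
    ∑ I, hcWeight G lam I * f I =
      ∑ J ∈ ({J | IndepFinset G J ∧ Disjoint J (insert v (G.neighborFinset v))} :
          Finset (Finset V)),
        lam ^ J.card * (lam * f (insert v J) +
          ∑ S ∈ (uncoveredNeighborFinset G v J).powerset, lam ^ S.card * f (J ∪ S)) := by
  have hmaps : ∀ I ∈ ({I | IndepFinset G I} : Finset (Finset V)),
      I \ insert v (G.neighborFinset v) ∈
        ({J | IndepFinset G J ∧ Disjoint J (insert v (G.neighborFinset v))} :
          Finset (Finset V)) := by
    intro I hI
    simp only [mem_filter, mem_univ, true_and] at hI ⊢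
    exact ⟨fun u hu w hw => hI u (mem_sdiff.mp hu).1 w (mem_sdiff.mp hw).1,
      disjoint_sdiff_self_left⟩
  calc ∑ I, hcWeight G lam I * f I = ∑ I ∈ {I | IndepFinset G I}, lam ^ I.card * f I := by
        rw [sum_filter]
        exact sum_congr rfl fun I _ => by unfold hcWeight; split_ifs <;> simp
    _ = _ := by
        rw [← sum_fiberwise_of_maps_to hmaps]
        refine sum_congr rfl fun J hJ => ?_
        simp only [mem_filter, mem_univ, true_and] at hJ
        rw [filter_filter, sum_filter_indepFinset_sdiff_eq hG hJ.1 hJ.2,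
          card_insert_of_notMem fun hv => disjoint_left.mp hJ.2 hv (mem_insert_self _ _)]
        rw [mul_add, mul_sum, pow_succ, mul_assoc]
        refine congrArg _ (sum_congr rfl fun S hS => ?_)
        have hJS : Disjoint J S := (hJ.2.mono_right (subset_insert _ _)).mono_right
          ((mem_powerset.mp hS).trans (filter_subset _ _))
        rw [card_union_of_disjoint hJS, pow_add, mul_assoc]

lemma sum_hcWeight_mul_local_nonneg (hG : G.CliqueFree 3) (v : V) {a b lam : ℝ}
    (ha : 0 < a) (hb : 0 < b) (hlam : 0 < lam) :
    0 ≤ ∑ I, hcWeight G lam I * (a * (if v ∈ I then 1 else 0) +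
      b * ((G.neighborFinset v ∩ I).card : ℝ) - hardCoreLocalBound a b lam) := by
  rw [sum_hcWeight_mul_eq hG v]
  refine sum_nonneg fun J hJ => mul_nonneg (by positivity) ?_
  simp only [mem_filter, mem_univ, true_and] at hJ
  have hvJ : v ∉ J := fun hv => disjoint_left.mp hJ.2 hv (mem_insert_self _ _)
  have hNJ : G.neighborFinset v ∩ insert v J = ∅ := by
    rw [← disjoint_iff_inter_eq_empty, disjoint_insert_right]
    exact ⟨by simp, (hJ.2.mono_right (subset_insert _ _)).symm⟩
  have hS : ∀ S ∈ (uncoveredNeighborFinset G v J).powerset,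
      v ∉ J ∪ S ∧ G.neighborFinset v ∩ (J ∪ S) = S := by
    intro S hS
    have hSN : S ⊆ G.neighborFinset v := (mem_powerset.mp hS).trans (filter_subset _ _)
    have hJN : Disjoint (G.neighborFinset v) J := (hJ.2.mono_right (subset_insert _ _)).symm
    refine ⟨fun hv => (mem_union.mp hv).elim hvJ fun hvS => ?_, ?_⟩
    · exact G.irrefl ((G.mem_neighborFinset v v).mp (hSN hvS))
    · rw [inter_union_distrib_left, disjoint_iff_inter_eq_empty.mp hJN, empty_union,
        inter_eq_right.mpr hSN]
  have hsum : ∑ S ∈ (uncoveredNeighborFinset G v J).powerset, lam ^ S.card *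
      (a * (if v ∈ J ∪ S then 1 else 0) + b * ((G.neighborFinset v ∩ (J ∪ S)).card : ℝ) -
        hardCoreLocalBound a b lam) =
      b * ∑ S ∈ (uncoveredNeighborFinset G v J).powerset, lam ^ S.card * S.card -
        hardCoreLocalBound a b lam *
          ∑ S ∈ (uncoveredNeighborFinset G v J).powerset, lam ^ S.card := by
    rw [mul_sum, mul_sum, ← sum_sub_distrib]
    refine sum_congr rfl fun S hS' => ?_
    rw [if_neg (hS S hS').1, (hS S hS').2]
    ring
  rw [if_pos (mem_insert_self v J), hNJ, hsum, card_empty, Nat.cast_zero]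
  linarith [hardCoreLocalBound_mul_le_sum_powerset ha hb hlam (uncoveredNeighborFinset G v J)]

end NeighbourhoodDecomposition

/-- Lemma 4 of the paper: a local lower bound in the hard-core model on a triangle-free
graph. For a random independent set `𝐈` from the hard-core model at fugacity `lam > 0`,
every vertex `v` satisfies
`α_v·Pr(v ∈ 𝐈) + β_v·𝔼|N(v) ∩ 𝐈| ≥ β_v·lam·(log(α_v/β_v) + log log(1+lam) + 1) / ((1+lam)·log(1+lam))`. -/
theorem hard_core_local_bound {V : Type*} [Fintype V] [DecidableEq V]
    (G : SimpleGraph V) [DecidableRel G.Adj] (hG : G.CliqueFree 3)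
    (α β : V → ℝ) (hα : ∀ v, 0 < α v) (hβ : ∀ v, 0 < β v)
    (lam : ℝ) (hlam : 0 < lam) (v : V) :
    β v * lam * (Real.log (α v / β v) + Real.log (Real.log (1 + lam)) + 1) /
        ((1 + lam) * Real.log (1 + lam)) ≤
      α v * (∑ I : Finset V, if v ∈ I then hcProb G lam I else 0) +
        β v * ∑ I : Finset V, hcProb G lam I * ((G.neighborFinset v ∩ I).card : ℝ) := by
  change hardCoreLocalBound (α v) (β v) lam ≤ _
  convert le_sum_hcProb_mul_of_nonneg G hlam.le
    (sum_hcWeight_mul_local_nonneg hG v (hα v) (hβ v) hlam) using 1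
  simp only [mul_sum, ← sum_add_distrib]
  exact sum_congr rfl fun I _ => by split_ifs <;> ring
end

section
/- Let ℋ = (L, H) be a cover of a finite simple graph G. Suppose there is a function ℓ : V(G) → ℤ with ℓ(u) ≥ 3 for all u, such that for all u ∈ V(G): |L(u)| ≥ ℓ(u), and for every c ∈ L(u) and every v ∈ N_G(u), deg*_ℋ(c) ≤ ℓ(v)/8. Then G is ℋ-colourable. -/
/-- `(L, H)` is a cover of the graph `G` (in the sense of correspondence/DP-colouring):
(1) the sets `L u` partition the vertices of `H`; (2) each `L u` induces a complete
subgraph of `H`; (3) edges of `H` only join colours of a vertex or of adjacent vertices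
of `G`; (4) for adjacent `u v`, the edges of `H` between `L u` and `L v` form a matching. -/
def IsCover {V U : Type*} (G : SimpleGraph V) (H : SimpleGraph U) (L : V → Finset U) :
    Prop :=
  (∀ c : U, ∃! u : V, c ∈ L u) ∧
  (∀ u : V, ∀ c ∈ L u, ∀ d ∈ L u, c ≠ d → H.Adj c d) ∧
  (∀ c d : U, H.Adj c d → ∀ u v : V, c ∈ L u → d ∈ L v → u = v ∨ G.Adj u v) ∧
  (∀ u v : V, G.Adj u v →
    ∀ c ∈ L u, ∀ d ∈ L v, ∀ d' ∈ L v, H.Adj c d → H.Adj c d' → d = d')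

/-- The degree `deg*_ℋ(c)` of a colour `c` in the cross-edge subgraph `H*` of the cover:
the number of `H`-neighbours of `c` lying in a part different from that of `c`. -/
def degStar {V U : Type*} [Fintype V] [Fintype U] [DecidableEq U]
    (H : SimpleGraph U) [DecidableRel H.Adj] (L : V → Finset U) (c : U) : ℕ :=
  (Finset.univ.filter fun d : U => H.Adj c d ∧ ∀ u : V, c ∈ L u → d ∉ L u).card

open Finset Function

theorem Fintype.card_filter_piFinset_apply_eq_mul_le {ι : Type*} {α : ι → Type*} [Fintype ι]
    [DecidableEq ι] [∀ i, DecidableEq (α i)] (S : ∀ i, Finset (α i)) (P : (∀ i, α i) → Prop)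
    [DecidablePred P] (i : ι) (a : α i) (hP : ∀ σ b, P σ → P (update σ i b)) :
    #((piFinset S).filter fun σ => P σ ∧ σ i = a) * #(S i) ≤ #((piFinset S).filter P) := by
  rw [← card_product]
  refine card_le_card_of_injOn (fun q => update q.1 i q.2) ?_ ?_
  · rintro ⟨σ, b⟩ hq
    simp only [mem_coe, mem_product, mem_filter, mem_piFinset] at hq ⊢
    refine ⟨fun j => ?_, hP σ b hq.1.2.1⟩
    rcases eq_or_ne j i with rfl | hj
    · simpa using hq.2
    · simpa [hj] using hq.1.1 j
  · rintro ⟨σ, b⟩ hq ⟨τ, c⟩ hr h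
    simp only [mem_coe, mem_product, mem_filter] at hq hr
    have hbc : b = c := by simpa using congr_fun h i
    subst hbc
    refine Prod.ext (funext fun j => ?_) rfl
    rcases eq_or_ne j i with rfl | hj
    · exact hq.1.2.2.trans hr.1.2.2.symm
    · simpa [hj] using congr_fun h j

theorem Finset.prod_one_sub_mul_le_of_insert {κ : Type*} [DecidableEq κ] (N : Finset κ → ℝ)
    (x : κ → ℝ) (R A : Finset κ) (hx : ∀ f ∈ A, x f ≤ 1)
    (hstep : ∀ B ⊆ A, ∀ f ∈ A, f ∉ B → (1 - x f) * N (R ∪ B) ≤ N (insert f (R ∪ B))) :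
    (∏ f ∈ A, (1 - x f)) * N R ≤ N (R ∪ A) := by
  induction A using Finset.induction_on with
  | empty => simp
  | @insert f A hf ih =>
    have ih' := ih (fun g hg => hx g (mem_insert_of_mem hg))
      fun B hB g hg => hstep B (hB.trans (subset_insert f A)) g (mem_insert_of_mem hg)
    rw [prod_insert hf, mul_assoc, union_insert]
    calc (1 - x f) * ((∏ g ∈ A, (1 - x g)) * N R)
        ≤ (1 - x f) * N (R ∪ A) :=
          mul_le_mul_of_nonneg_left ih' (sub_nonneg.2 (hx f (mem_insert_self f A)))
      _ ≤ N (insert f (R ∪ A)) := hstep A (subset_insert f A) f (mem_insert_self f A) hf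

theorem Finset.one_sub_sum_le_prod_one_sub {κ : Type*} (s : Finset κ) (f : κ → ℝ)
    (hf : ∀ i ∈ s, 0 ≤ f i ∧ f i ≤ 1) : 1 - ∑ i ∈ s, f i ≤ ∏ i ∈ s, (1 - f i) := by
  classical
  induction s using Finset.induction_on with
  | empty => simp
  | @insert a s ha ih =>
    obtain ⟨ha0, ha1⟩ := hf a (mem_insert_self a s)
    have hs : 0 ≤ ∑ i ∈ s, f i := sum_nonneg fun i hi => (hf i (mem_insert_of_mem hi)).1
    rw [prod_insert ha, sum_insert ha]
    calc 1 - (f a + ∑ i ∈ s, f i) ≤ (1 - f a) * (1 - ∑ i ∈ s, f i) := by nlinarith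
      _ ≤ (1 - f a) * ∏ i ∈ s, (1 - f i) :=
        mul_le_mul_of_nonneg_left (ih fun i hi => hf i (mem_insert_of_mem hi)) (by linarith)

theorem Finset.sum_one_div_le_one_of_card_le {κ : Type*} (s : Finset κ) (y : κ → ℝ)
    (hy : ∀ i ∈ s, (#s : ℝ) ≤ y i) : ∑ i ∈ s, 1 / y i ≤ 1 := by
  rcases s.eq_empty_or_nonempty with rfl | hs
  · simp
  have hpos : (0 : ℝ) < #s := by exact_mod_cast hs.card_pos
  calc ∑ i ∈ s, 1 / y i ≤ ∑ _i ∈ s, 1 / (#s : ℝ) :=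
        sum_le_sum fun i hi => one_div_le_one_div_of_le hpos (hy i hi)
    _ = 1 := by rw [sum_const, nsmul_eq_mul, mul_one_div_cancel hpos.ne']

/-! The pair event `((i, a), (j, b))` is the event `σ i = a ∧ σ j = b` for `σ` uniform in
`piFinset S`; probabilities are replaced by the counts `#(avoiding S T)`. -/

namespace PairEvent

open Fintype

variable {ι α : Type*}

def Hits (σ : ι → α) (e : (ι × α) × (ι × α)) : Prop :=
  σ e.1.1 = e.1.2 ∧ σ e.2.1 = e.2.2

instance [DecidableEq α] (σ : ι → α) (e : (ι × α) × (ι × α)) : Decidable (Hits σ e) :=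
  inferInstanceAs (Decidable (_ ∧ _))

variable [DecidableEq ι]

def coords (e : (ι × α) × (ι × α)) : Finset ι := {e.1.1, e.2.1}

theorem hits_update_iff {σ : ι → α} {e : (ι × α) × (ι × α)} {i : ι} (b : α)
    (hi : i ∉ coords e) : Hits (update σ i b) e ↔ Hits σ e := by
  simp only [coords, mem_insert, mem_singleton, not_or] at hi
  simp [Hits, update_of_ne (Ne.symm hi.1), update_of_ne (Ne.symm hi.2)]

variable [Fintype ι] [DecidableEq α]

def avoiding (S : ι → Finset α) (T : Finset ((ι × α) × (ι × α))) : Finset (ι → α) :=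
  (piFinset S).filter fun σ => ∀ e ∈ T, ¬ Hits σ e

variable {S : ι → Finset α} {T T' : Finset ((ι × α) × (ι × α))}

theorem avoiding_anti (h : T ⊆ T') : avoiding S T' ⊆ avoiding S T :=
  monotone_filter_right _ fun _ _ hσ e he => hσ e (h he)

theorem avoiding_insert (e : (ι × α) × (ι × α)) :
    avoiding S (insert e T) = (avoiding S T).filter fun σ => ¬ Hits σ e := by
  ext σ
  simp only [avoiding, mem_filter, forall_mem_insert]
  tauto

theorem card_filter_hits_mul_le (e : (ι × α) × (ι × α)) (he : e.1.1 ≠ e.2.1)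
    (hT : ∀ f ∈ T, Disjoint (coords e) (coords f)) :
    #((avoiding S T).filter (Hits · e)) * (#(S e.1.1) * #(S e.2.1)) ≤ #(avoiding S T) := by
  set P : (ι → α) → Prop := fun σ => ∀ f ∈ T, ¬ Hits σ f
  have hP : ∀ i ∈ coords e, ∀ σ b, P σ → P (update σ i b) := fun i hi σ b hσ f hf =>
    (hits_update_iff b (disjoint_left.1 (hT f hf) hi)).not.2 (hσ f hf)
  have hfirst := Fintype.card_filter_piFinset_apply_eq_mul_le S (fun σ => P σ ∧ σ e.2.1 = e.2.2)
    e.1.1 e.1.2 fun σ b hσ =>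
      ⟨hP _ (by simp [coords]) σ b hσ.1, by rw [update_of_ne he.symm, hσ.2]⟩
  have hsecond := Fintype.card_filter_piFinset_apply_eq_mul_le S P e.2.1 e.2.2
    (hP _ (by simp [coords]))
  have hsplit : (avoiding S T).filter (Hits · e)
      = (piFinset S).filter fun σ => (P σ ∧ σ e.2.1 = e.2.2) ∧ σ e.1.1 = e.1.2 := by
    ext σ
    simp only [avoiding, mem_filter]
    simp only [Hits, P]
    tauto
  rw [hsplit, ← mul_assoc]
  exact (Nat.mul_le_mul_right _ hfirst).trans hsecond

def dependents (E : Finset ((ι × α) × (ι × α))) (e : (ι × α) × (ι × α)) :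
    Finset ((ι × α) × (ι × α)) :=
  (E.filter fun f => ¬ Disjoint (coords e) (coords f)).erase e

theorem card_filter_hits_le (e : (ι × α) × (ι × α)) (he : e.1.1 ≠ e.2.1)
    (T : Finset ((ι × α) × (ι × α))) {p y : ℝ} (hp : 0 ≤ p) (hy : 0 ≤ y)
    (hcond : 1 ≤ y * p * ((#(S e.1.1) : ℝ) * #(S e.2.1)))
    (hchain : p * #(avoiding S (T.filter fun f => Disjoint (coords e) (coords f)))
      ≤ (#(avoiding S T) : ℝ)) :
    (#((avoiding S T).filter (Hits · e)) : ℝ) ≤ y * #(avoiding S T) := by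
  set T2 := T.filter fun f => Disjoint (coords e) (coords f)
  have hmono : #((avoiding S T).filter (Hits · e)) ≤ #((avoiding S T2).filter (Hits · e)) :=
    card_le_card (filter_subset_filter _ (avoiding_anti (filter_subset _ _)))
  have hfix : (#((avoiding S T2).filter (Hits · e)) : ℝ) * (#(S e.1.1) * #(S e.2.1))
      ≤ #(avoiding S T2) := by
    exact_mod_cast card_filter_hits_mul_le e he fun f hf => (mem_filter.1 hf).2
  calc (#((avoiding S T).filter (Hits · e)) : ℝ)
      ≤ #((avoiding S T2).filter (Hits · e)) := by exact_mod_cast hmono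
    _ ≤ #((avoiding S T2).filter (Hits · e)) * (y * p * ((#(S e.1.1) : ℝ) * #(S e.2.1))) :=
        le_mul_of_one_le_right (Nat.cast_nonneg _) hcond
    _ = y * p * (#((avoiding S T2).filter (Hits · e)) * ((#(S e.1.1) : ℝ) * #(S e.2.1))) := by
        ring
    _ ≤ y * p * #(avoiding S T2) := by gcongr
    _ ≤ y * #(avoiding S T) := by rw [mul_assoc]; gcongr

theorem one_sub_mul_card_avoiding_le (E : Finset ((ι × α) × (ι × α)))
    (hE : ∀ e ∈ E, e.1.1 ≠ e.2.1) (x : (ι × α) × (ι × α) → ℝ)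
    (hx0 : ∀ e ∈ E, 0 ≤ x e) (hx1 : ∀ e ∈ E, x e ≤ 1)
    (hcond : ∀ e ∈ E,
      1 ≤ x e * (∏ f ∈ dependents E e, (1 - x f)) * ((#(S e.1.1) : ℝ) * #(S e.2.1))) :
    ∀ T ⊆ E, ∀ e ∈ E, (1 - x e) * #(avoiding S T) ≤ (#(avoiding S (insert e T)) : ℝ) := by
  intro T
  induction T using Finset.strongInduction with
  | H T ih =>
  intro hTE e he
  by_cases heT : e ∈ T
  · rw [insert_eq_of_mem heT]
    exact mul_le_of_le_one_left (Nat.cast_nonneg _) (by linarith [hx0 e he])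
  set T1 := T.filter fun f => ¬ Disjoint (coords e) (coords f)
  set T2 := T.filter fun f => Disjoint (coords e) (coords f)
  have hfactor : ∀ f ∈ T1, 0 ≤ 1 - x f := fun f hf => by
    linarith [hx1 f (hTE (filter_subset _ _ hf))]
  have hchain : (∏ f ∈ T1, (1 - x f)) * #(avoiding S T2) ≤ (#(avoiding S T) : ℝ) := by
    have h := prod_one_sub_mul_le_of_insert (fun T => (#(avoiding S T) : ℝ)) x T2 T1
      (fun f hf => by linarith [hfactor f hf]) fun B hB f hf hfB => by
        have hsub : T2 ∪ B ⊆ T := union_subset (filter_subset _ _) (hB.trans (filter_subset _ _))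
        refine ih _ ((ssubset_iff_of_subset hsub).2 ⟨f, filter_subset _ _ hf, ?_⟩)
          (hsub.trans hTE) f (hTE (filter_subset _ _ hf))
        simp only [mem_union, not_or]
        exact ⟨fun hf2 => (mem_filter.1 hf).2 (mem_filter.1 hf2).2, hfB⟩
    rwa [show T2 ∪ T1 = T from filter_union_filter_not_eq _ _] at h
  have hΓ : ∏ f ∈ dependents E e, (1 - x f) ≤ ∏ f ∈ T1, (1 - x f) := by
    refine prod_le_prod_of_subset_of_le_one (fun f hf => ?_) (fun f hf => ?_) (fun f hf _ => ?_)
    · have hf' := mem_filter.1 hf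
      exact mem_erase.2 ⟨fun hfe => heT (hfe ▸ hf'.1), mem_filter.2 ⟨hTE hf'.1, hf'.2⟩⟩
    · linarith [hx1 f (filter_subset _ _ (erase_subset _ _ hf))]
    · linarith [hx0 f (filter_subset _ _ (erase_subset _ _ hf))]
  have hhit := card_filter_hits_le e (hE e he) T (prod_nonneg hfactor) (hx0 e he)
    ((hcond e he).trans (by gcongr; exact hx0 e he)) hchain
  have hsplit : (#(avoiding S T) : ℝ)
      = #((avoiding S T).filter (Hits · e)) + #(avoiding S (insert e T)) := by
    rw [avoiding_insert]
    exact_mod_cast (card_filter_add_card_filter_not (Hits · e)).symm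
  linarith

theorem avoiding_nonempty (hS : ∀ i, (S i).Nonempty) (E : Finset ((ι × α) × (ι × α)))
    (hE : ∀ e ∈ E, e.1.1 ≠ e.2.1) (x : (ι × α) × (ι × α) → ℝ)
    (hx0 : ∀ e ∈ E, 0 ≤ x e) (hx1 : ∀ e ∈ E, x e < 1)
    (hcond : ∀ e ∈ E,
      1 ≤ x e * (∏ f ∈ dependents E e, (1 - x f)) * ((#(S e.1.1) : ℝ) * #(S e.2.1))) :
    (avoiding S E).Nonempty := by
  have hstep := one_sub_mul_card_avoiding_le E hE x hx0 (fun e he => (hx1 e he).le) hcond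
  have hchain := prod_one_sub_mul_le_of_insert (fun T => (#(avoiding S T) : ℝ)) x ∅ E
    (fun e he => (hx1 e he).le) fun B hB f hf _ => hstep _ (by simpa using hB) f hf
  have hprod : 0 < ∏ f ∈ E, (1 - x f) := prod_pos fun f hf => by linarith [hx1 f hf]
  have hall : (0 : ℝ) < #(avoiding S ∅) := by
    rw [show avoiding S ∅ = piFinset S by simp [avoiding]]
    exact_mod_cast card_pos.2 (piFinset_nonempty.2 hS)
  rw [empty_union] at hchain
  exact card_pos.1 (by exact_mod_cast (mul_pos hprod hall).trans_le hchain)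

end PairEvent

theorem IsCover.eq_of_mem {V U : Type*} {G : SimpleGraph V} {H : SimpleGraph U}
    {L : V → Finset U} (hcov : IsCover G H L) {c : U} {u v : V} (hu : c ∈ L u) (hv : c ∈ L v) :
    u = v :=
  (hcov.1 c).unique hu hv

section Cover

open PairEvent

variable {V U : Type*}

noncomputable def conflictWeight (L : V → Finset U) (e : (V × U) × (V × U)) : ℝ :=
  2 / (#(L e.1.1) * #(L e.2.1))

theorem conflictWeight_nonneg (L : V → Finset U) (e : (V × U) × (V × U)) :
    0 ≤ conflictWeight L e := by
  unfold conflictWeight; positivity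

def orient [LinearOrder V] (w : V) (c : U) (p : V × U) : (V × U) × (V × U) :=
  if w < p.1 then ((w, c), p) else (p, (w, c))

theorem conflictWeight_orient [LinearOrder V] (L : V → Finset U) (w : V) (c : U) (p : V × U) :
    conflictWeight L (orient w c p) = 2 / (#(L w) * #(L p.1)) := by
  unfold orient conflictWeight
  split_ifs
  · rfl
  · rw [mul_comm]

variable [Fintype V] [Fintype U] [DecidableEq U]
  {G : SimpleGraph V} {H : SimpleGraph U} [DecidableRel H.Adj] {L : V → Finset U}

section CrossNeighbors

variable [DecidableEq V]

def crossNeighbors (H : SimpleGraph U) [DecidableRel H.Adj] (L : V → Finset U) (w : V) (c : U) :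
    Finset (V × U) :=
  univ.filter fun p => p.1 ≠ w ∧ p.2 ∈ L p.1 ∧ H.Adj c p.2

theorem mem_crossNeighbors {w : V} {c : U} {p : V × U} :
    p ∈ crossNeighbors H L w c ↔ p.1 ≠ w ∧ p.2 ∈ L p.1 ∧ H.Adj c p.2 := by
  simp [crossNeighbors]

theorem card_crossNeighbors_le_degStar (hcov : IsCover G H L) {w : V} {c : U} (hc : c ∈ L w) :
    #(crossNeighbors H L w c) ≤ degStar H L c := by
  refine card_le_card_of_injOn Prod.snd (fun p hp => ?_) fun p hp q hq hpq => ?_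
  · rw [mem_coe, mem_crossNeighbors] at hp
    simp only [coe_filter, mem_univ, true_and]
    exact ⟨hp.2.2, fun u hu hpu => hp.1 (hcov.eq_of_mem hp.2.1 (hcov.eq_of_mem hc hu ▸ hpu))⟩
  · rw [mem_coe, mem_crossNeighbors] at hp hq
    exact Prod.ext (hcov.eq_of_mem hp.2.1 (hpq ▸ hq.2.1)) hpq

theorem adj_of_mem_crossNeighbors (hcov : IsCover G H L) {w : V} {c : U} (hc : c ∈ L w)
    {p : V × U} (hp : p ∈ crossNeighbors H L w c) : G.Adj w p.1 := by
  rw [mem_crossNeighbors] at hp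
  exact (hcov.2.2.1 c p.2 hp.2.2 w p.1 hc hp.2.1).resolve_left (Ne.symm hp.1)

end CrossNeighbors

variable [LinearOrder V]

def conflicts (H : SimpleGraph U) [DecidableRel H.Adj] (L : V → Finset U) :
    Finset ((V × U) × (V × U)) :=
  univ.filter fun e => e.1.1 < e.2.1 ∧ e.1.2 ∈ L e.1.1 ∧ e.2.2 ∈ L e.2.1 ∧ H.Adj e.1.2 e.2.2

theorem mem_conflicts {e : (V × U) × (V × U)} :
    e ∈ conflicts H L ↔ e.1.1 < e.2.1 ∧ e.1.2 ∈ L e.1.1 ∧ e.2.2 ∈ L e.2.1 ∧ H.Adj e.1.2 e.2.2 := by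
  simp [conflicts]

theorem sum_conflictWeight_orient_le (hcov : IsCover G H L)
    (hdeg : ∀ u, ∀ c ∈ L u, ∀ v, G.Adj u v → 8 * degStar H L c ≤ #(L v)) {w : V} {c : U}
    (hc : c ∈ L w) :
    ∑ p ∈ crossNeighbors H L w c, conflictWeight L (orient w c p) ≤ 1 / (4 * #(L w)) := by
  have hcard : ∀ p ∈ crossNeighbors H L w c, (#(crossNeighbors H L w c) : ℝ) ≤ #(L p.1) / 8 :=
    fun p hp => by
      have h := (Nat.mul_le_mul_left 8 (card_crossNeighbors_le_degStar hcov hc)).trans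
        (hdeg w c hc p.1 (adj_of_mem_crossNeighbors hcov hc hp))
      rw [le_div_iff₀ (by norm_num), mul_comm]
      exact_mod_cast h
  calc ∑ p ∈ crossNeighbors H L w c, conflictWeight L (orient w c p)
      = 1 / (4 * #(L w)) * ∑ p ∈ crossNeighbors H L w c, 1 / ((#(L p.1) : ℝ) / 8) := by
        rw [mul_sum]
        refine sum_congr rfl fun p _ => ?_
        rw [conflictWeight_orient]
        ring
    _ ≤ 1 / (4 * #(L w)) := by
        refine mul_le_of_le_one_right (by positivity) ?_
        exact sum_one_div_le_one_of_card_le _ _ hcard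

theorem sum_conflictWeight_touching_le (hcov : IsCover G H L)
    (hdeg : ∀ u, ∀ c ∈ L u, ∀ v, G.Adj u v → 8 * degStar H L c ≤ #(L v)) (w : V) :
    ∑ f ∈ (conflicts H L).filter (w ∈ coords ·), conflictWeight L f ≤ 1 / 4 := by
  have hsub : (conflicts H L).filter (w ∈ coords ·)
      ⊆ ((L w).sigma (crossNeighbors H L w)).image fun q => orient w q.1 q.2 := by
    rintro ⟨⟨u, c⟩, ⟨v, d⟩⟩ hf
    rw [mem_filter, mem_conflicts] at hf
    obtain ⟨⟨huv, hc, hd, hcd⟩, hw⟩ := hf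
    simp only [coords, mem_insert, mem_singleton] at hw
    rw [mem_image]
    rcases hw with rfl | rfl
    · refine ⟨⟨c, (v, d)⟩, mem_sigma.2 ⟨hc, mem_crossNeighbors.2 ⟨huv.ne', hd, hcd⟩⟩, ?_⟩
      simp [orient, huv]
    · refine ⟨⟨d, (u, c)⟩, mem_sigma.2 ⟨hd, mem_crossNeighbors.2 ⟨huv.ne, hc, hcd.symm⟩⟩, ?_⟩
      simp [orient, huv.not_gt]
  calc ∑ f ∈ (conflicts H L).filter (w ∈ coords ·), conflictWeight L f
      ≤ ∑ f ∈ ((L w).sigma (crossNeighbors H L w)).image (fun q => orient w q.1 q.2),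
          conflictWeight L f :=
        sum_le_sum_of_subset_of_nonneg hsub fun f _ _ => conflictWeight_nonneg L f
    _ ≤ ∑ q ∈ (L w).sigma (crossNeighbors H L w), conflictWeight L (orient w q.1 q.2) :=
        sum_image_le_of_nonneg fun f _ => conflictWeight_nonneg L f
    _ = ∑ c ∈ L w, ∑ p ∈ crossNeighbors H L w c, conflictWeight L (orient w c p) :=
        sum_sigma ..
    _ ≤ ∑ _c ∈ L w, 1 / (4 * (#(L w) : ℝ)) :=
        sum_le_sum fun c hc => sum_conflictWeight_orient_le hcov hdeg hc
    _ ≤ 1 / 4 := by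
        rw [sum_const, nsmul_eq_mul]
        rcases (#(L w)).eq_zero_or_pos with h | h
        · simp [h]
        · rw [mul_one_div, div_le_div_iff₀ (by positivity) (by norm_num)]
          linarith

theorem conflictWeight_le_quarter (hcov : IsCover G H L)
    (hdeg : ∀ u, ∀ c ∈ L u, ∀ v, G.Adj u v → 8 * degStar H L c ≤ #(L v))
    {e : (V × U) × (V × U)} (he : e ∈ conflicts H L) : conflictWeight L e ≤ 1 / 4 :=
  (single_le_sum (fun f _ => conflictWeight_nonneg L f)
    (mem_filter.2 ⟨he, by simp [coords]⟩)).trans (sum_conflictWeight_touching_le hcov hdeg e.1.1)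

theorem sum_conflictWeight_dependents_le (hcov : IsCover G H L)
    (hdeg : ∀ u, ∀ c ∈ L u, ∀ v, G.Adj u v → 8 * degStar H L c ≤ #(L v))
    (e : (V × U) × (V × U)) :
    ∑ f ∈ dependents (conflicts H L) e, conflictWeight L f ≤ 1 / 2 := by
  set E := conflicts H L
  have hsub : dependents E e ⊆ E.filter (e.1.1 ∈ coords ·) ∪ E.filter (e.2.1 ∈ coords ·) := by
    intro f hf
    simp only [dependents, mem_erase, mem_filter, not_disjoint_iff] at hf
    obtain ⟨-, hfE, a, hae, haf⟩ := hf
    simp only [coords, mem_insert, mem_singleton] at hae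
    rcases hae with rfl | rfl
    · exact mem_union_left _ (mem_filter.2 ⟨hfE, haf⟩)
    · exact mem_union_right _ (mem_filter.2 ⟨hfE, haf⟩)
  calc ∑ f ∈ dependents E e, conflictWeight L f
      ≤ ∑ f ∈ E.filter (e.1.1 ∈ coords ·) ∪ E.filter (e.2.1 ∈ coords ·), conflictWeight L f :=
        sum_le_sum_of_subset_of_nonneg hsub fun f _ _ => conflictWeight_nonneg L f
    _ ≤ ∑ f ∈ E.filter (e.1.1 ∈ coords ·), conflictWeight L f
          + ∑ f ∈ E.filter (e.2.1 ∈ coords ·), conflictWeight L f := by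
        rw [← sum_union_inter]
        exact le_add_of_nonneg_right (sum_nonneg fun f _ => conflictWeight_nonneg L f)
    _ ≤ 1 / 4 + 1 / 4 :=
        add_le_add (sum_conflictWeight_touching_le hcov hdeg _)
          (sum_conflictWeight_touching_le hcov hdeg _)
    _ = 1 / 2 := by norm_num

theorem one_le_conflictWeight_mul_prod (hcov : IsCover G H L) (hne : ∀ u, (L u).Nonempty)
    (hdeg : ∀ u, ∀ c ∈ L u, ∀ v, G.Adj u v → 8 * degStar H L c ≤ #(L v))
    (e : (V × U) × (V × U)) :
    1 ≤ conflictWeight L e * (∏ f ∈ dependents (conflicts H L) e, (1 - conflictWeight L f)) *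
      ((#(L e.1.1) : ℝ) * #(L e.2.1)) := by
  set E := conflicts H L
  have hsum := sum_conflictWeight_dependents_le hcov hdeg e
  have hprod : 1 / 2 ≤ ∏ f ∈ dependents E e, (1 - conflictWeight L f) :=
    (by linarith : (1 : ℝ) / 2 ≤ 1 - ∑ f ∈ dependents E e, conflictWeight L f).trans
      (one_sub_sum_le_prod_one_sub _ _ fun f hf => ⟨conflictWeight_nonneg L f,
        (conflictWeight_le_quarter hcov hdeg (filter_subset _ _ (erase_subset _ _ hf))).trans
          (by norm_num)⟩)
  have hweight : conflictWeight L e * ((#(L e.1.1) : ℝ) * #(L e.2.1)) = 2 := by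
    have h1 : (#(L e.1.1) : ℝ) ≠ 0 := by exact_mod_cast (hne _).card_pos.ne'
    have h2 : (#(L e.2.1) : ℝ) ≠ 0 := by exact_mod_cast (hne _).card_pos.ne'
    unfold conflictWeight
    field_simp
  calc (1 : ℝ) = 2 * (1 / 2) := by norm_num
    _ ≤ 2 * ∏ f ∈ dependents E e, (1 - conflictWeight L f) := by gcongr
    _ = _ := by rw [← hweight]; ring

theorem indepFinset_image_of_mem_avoiding {σ : V → U} (hσ : σ ∈ avoiding L (conflicts H L)) :
    IndepFinset H (univ.image σ) := by
  simp only [avoiding, mem_filter, Fintype.mem_piFinset] at hσ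
  have hσE : ∀ p q, p < q → ¬ H.Adj (σ p) (σ q) := fun p q hpq hadj =>
    hσ.2 ((p, σ p), (q, σ q)) (mem_conflicts.2 ⟨hpq, hσ.1 p, hσ.1 q, hadj⟩) ⟨rfl, rfl⟩
  simp only [IndepFinset, mem_image, mem_univ, true_and, forall_exists_index,
    forall_apply_eq_imp_iff]
  intro p q hadj
  rcases lt_trichotomy p q with hpq | rfl | hpq
  · exact hσE p q hpq hadj
  · exact H.irrefl hadj
  · exact hσE q p hpq hadj.symm

end Cover

theorem IsCover.exists_indepFinset_of_degStar_le {V U : Type*} [Fintype V] [Fintype U]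
    [DecidableEq U] {G : SimpleGraph V} {H : SimpleGraph U} [DecidableRel H.Adj]
    {L : V → Finset U} (hcov : IsCover G H L) (hne : ∀ u, (L u).Nonempty)
    (hdeg : ∀ u, ∀ c ∈ L u, ∀ v, G.Adj u v → 8 * degStar H L c ≤ #(L v)) :
    ∃ I : Finset U, IndepFinset H I ∧ #I = Fintype.card V := by
  let : LinearOrder V := LinearOrder.lift' _ (Fintype.equivFin V).injective
  obtain ⟨σ, hσ⟩ := PairEvent.avoiding_nonempty hne (conflicts H L)
    (fun e he => (mem_conflicts.1 he).1.ne) (conflictWeight L)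
    (fun e _ => conflictWeight_nonneg L e)
    (fun e he => (conflictWeight_le_quarter hcov hdeg he).trans_lt (by norm_num))
    (fun e _ => one_le_conflictWeight_mul_prod hcov hne hdeg e)
  have hσL : ∀ u, σ u ∈ L u := Fintype.mem_piFinset.1 (mem_filter.1 hσ).1
  refine ⟨univ.image σ, indepFinset_image_of_mem_avoiding hσ, ?_⟩
  have hinj : Injective σ := fun p q h => hcov.eq_of_mem (hσL p) (by rw [h]; exact hσL q)
  rw [card_image_of_injective _ hinj, card_univ]

/-- Lemma 6 of the paper (the local "finishing blow" for correspondence colouring):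
if `ℓ : V(G) → ℤ` satisfies `ℓ(u) ≥ 3`, `|L(u)| ≥ ℓ(u)` and
`deg*_ℋ(c) ≤ ℓ(v)/8` for every `c ∈ L(u)` and every neighbour `v` of `u`, then `G` is
`ℋ`-colourable, i.e. `H` has an independent set of size `|V(G)|`. -/
theorem finishing_blow {V U : Type*} [Fintype V] [Fintype U] [DecidableEq U]
    (G : SimpleGraph V) [DecidableRel G.Adj] (H : SimpleGraph U) [DecidableRel H.Adj]
    (L : V → Finset U) (hcov : IsCover G H L) (ℓ : V → ℤ)
    (h3 : ∀ u : V, 3 ≤ ℓ u)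
    (hsize : ∀ u : V, ℓ u ≤ ((L u).card : ℤ))
    (hdeg : ∀ u : V, ∀ c ∈ L u, ∀ v ∈ G.neighborFinset u,
      (degStar H L c : ℝ) ≤ (ℓ v : ℝ) / 8) :
    ∃ I : Finset U, IndepFinset H I ∧ I.card = Fintype.card V := by
  refine hcov.exists_indepFinset_of_degStar_le (fun u => card_pos.1 ?_) fun u c hc v huv => ?_
  · have := h3 u
    have := hsize u
    omega
  · have h8 : (degStar H L c : ℝ) ≤ (ℓ v : ℝ) / 8 :=
      hdeg u c hc v ((G.mem_neighborFinset u v).2 huv)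
    have hv : (ℓ v : ℝ) ≤ #(L v) := by exact_mod_cast hsize v
    exact_mod_cast (by linarith : (8 * degStar H L c : ℝ) ≤ #(L v))
end

section
/- For every ε > 0 there exists Δ₀ such that for all Δ ≥ Δ₀, every finite triangle-free simple graph G of maximum degree at most Δ admits a fractional colouring w such that w(v) ⊆ [0, (1+ε)·Δ/log Δ) for every v ∈ V(G); in particular the fractional chromatic number of G is at most (1+ε)·Δ/log Δ. -/
/-!
For fugacity `λ > 0` the hard-core model on `G[S]` picks an independent set `I ⊆ S` with
probability proportional to `λ^|I|`. In a triangle-free graph, once `I \ N[v]` is fixed, `I ∩ N[v]`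
is either `{v}` or an arbitrary subset of the `f` neighbours of `v` that are still free, so
`β P(v ∈ I) + γ E|I ∩ N(v)| ≥ 1` as soon as `λ + (1+λ)^f ≤ βλ + γfλ(1+λ)^(f-1)` for every `f`.
Given demands `d`, run the hard-core model on the support of `d` until the first vertex is
satisfied, then recurse on the remaining demands; the local occupancy bound shows that every
vertex finishes by time `β d(v) + γ Σ_{u ∼ v} d(u)`. For `λ ≈ ε/8` and a threshold
`f₀ ≈ (1 + λ/4) log Δ / λ` separating the two regimes of `f`, one can take
`β + γΔ ≤ (1 + ε) Δ / log Δ`.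
-/

open Finset MeasureTheory Function Real Filter Asymptotics

theorem Finset.sum_powerset_card_mul_pow {ι R : Type*} [DecidableEq ι] [CommSemiring R]
    (s : Finset ι) (x : R) :
    ∑ t ∈ s.powerset, (#t : R) * x ^ #t = #s * x * (1 + x) ^ (#s - 1) := by
  induction s using Finset.induction_on with
  | empty => simp
  | insert a s ha ih =>
    have hcard : ∀ t ∈ s.powerset, #(insert a t) = #t + 1 := fun t ht =>
      card_insert_of_notMem fun h => ha (mem_powerset.mp ht h)
    rw [sum_powerset_insert ha, ih, card_insert_of_notMem ha,
      sum_congr rfl fun t ht => by rw [hcard t ht]]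
    have hpow : ∑ t ∈ s.powerset, x ^ #t = (1 + x) ^ #s := by
      simpa [add_comm] using sum_pow_mul_eq_add_pow x (1 : R) s
    have hshift : ∑ t ∈ s.powerset, ((#t + 1 : ℕ) : R) * x ^ (#t + 1)
        = x * ∑ t ∈ s.powerset, (#t : R) * x ^ #t + x * ∑ t ∈ s.powerset, x ^ #t := by
      simp only [mul_sum, ← sum_add_distrib]
      refine sum_congr rfl fun t _ => ?_
      push_cast
      ring
    rw [hshift, ih, hpow]
    rcases #s with _ | n
    · simp
    · push_cast
      ring

theorem Real.log_one_add_le_sub_sq_div_three {x : ℝ} (h0 : 0 ≤ x) (h1 : x ≤ 1 / 4) :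
    log (1 + x) ≤ x - x ^ 2 / 3 := by
  have hexp := quadratic_le_exp_of_nonneg (x := x - x ^ 2 / 3) (by nlinarith)
  rw [log_le_iff_le_exp (by linarith)]
  nlinarith

theorem exists_pairwise_disjoint_Ico {ι : Type*} [Fintype ι] (q : ι → ℝ) (hq : ∀ i, 0 ≤ q i) :
    ∃ o : ι → ℝ, (∀ i, 0 ≤ o i ∧ o i + q i ≤ ∑ j, q j) ∧
      Pairwise (Disjoint on fun i => Set.Ico (o i) (o i + q i)) := by
  classical
  let e := Fintype.equivFin ι
  let o i := ∑ j with e j < e i, q j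
  have hsucc : ∀ i, o i + q i = ∑ j ∈ insert i (univ.filter fun j => e j < e i), q j := fun i => by
    rw [sum_insert (by simp), add_comm]
  have hle : ∀ i k, e i < e k → o i + q i ≤ o k := fun i k hik => by
    rw [hsucc]
    refine sum_le_sum_of_subset_of_nonneg (insert_subset (by simpa using hik) fun j hj => ?_)
      fun j _ _ => hq j
    simp only [mem_filter, mem_univ, true_and] at hj ⊢
    exact hj.trans hik
  refine ⟨o, fun i => ⟨sum_nonneg fun j _ => hq j, ?_⟩, fun i k hik => ?_⟩
  · rw [hsucc]
    exact sum_le_sum_of_subset_of_nonneg (subset_univ _) fun j _ _ => hq j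
  have hdisj : ∀ i k, e i < e k →
      Disjoint (Set.Ico (o i) (o i + q i)) (Set.Ico (o k) (o k + q k)) := fun i k h =>
    Set.disjoint_left.mpr fun x hx hx' => (hx.2.trans_le (hle i k h)).not_ge hx'.1
  rcases lt_or_gt_of_ne (e.injective.ne hik) with h | h
  exacts [hdisj i k h, (hdisj k i h).symm]

theorem exists_prepend_Ico_blocks {ι : Type*} [Fintype ι] (q : ι → ℝ) (hq : ∀ i, 0 ≤ q i)
    (w' : ι → Set ℝ) (hmeas : ∀ i, MeasurableSet (w' i)) (hdisj : Pairwise (Disjoint on w'))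
    (hnonneg : ∀ i, w' i ⊆ Set.Ici 0) :
    ∃ w : ι → Set ℝ, (∀ i, MeasurableSet (w i)) ∧ Pairwise (Disjoint on w) ∧
      (∀ i, w i ⊆ Set.Ici 0) ∧ (∀ i, volume (w i) = ENNReal.ofReal (q i) + volume (w' i)) ∧
      ∀ i, ∀ x ∈ w i, (q i ≠ 0 ∧ x < ∑ j, q j) ∨ x - ∑ j, q j ∈ w' i := by
  obtain ⟨o, ho, hodisj⟩ := exists_pairwise_disjoint_Ico q hq
  set t := ∑ i, q i
  have ht : 0 ≤ t := sum_nonneg fun i _ => hq i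
  set block : ι → Set ℝ := fun i => Set.Ico (o i) (o i + q i)
  set shift : ι → Set ℝ := fun i => (fun x => x - t) ⁻¹' w' i
  have hblock : ∀ i, block i ⊆ Set.Ico 0 t := fun i x hx =>
    ⟨(ho i).1.trans hx.1, hx.2.trans_le (ho i).2⟩
  have hshift : ∀ i, shift i ⊆ Set.Ici t := fun i x hx => by
    simpa using hnonneg i hx
  have hblock_shift : ∀ i j, Disjoint (block i) (shift j) := fun i j =>
    Set.disjoint_left.mpr fun x hx hx' => (hblock i hx).2.not_ge (hshift j hx')
  have hshift_meas : ∀ i, MeasurableSet (shift i) := fun i =>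
    measurable_id.sub_const t (hmeas i)
  refine ⟨fun i => block i ∪ shift i, fun i => measurableSet_Ico.union (hshift_meas i),
    fun i j hij => ?_, fun i => Set.union_subset ((hblock i).trans Set.Ico_subset_Ici_self)
      ((hshift i).trans (Set.Ici_subset_Ici.mpr ht)), fun i => ?_, ?_⟩
  · simp only [onFun, Set.disjoint_union_left, Set.disjoint_union_right]
    exact ⟨⟨hodisj hij, (hblock_shift j i).symm⟩, hblock_shift i j, (hdisj hij).preimage _⟩
  · rw [measure_union (hblock_shift i i) (hshift_meas i), Real.volume_Ico, add_sub_cancel_left]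
    have : (fun x : ℝ => x - t) = (· + -t) := funext fun x => sub_eq_add_neg x t
    simp only [shift, this, measure_preimage_add_right]
  · rintro i x (hx | hx)
    · exact .inl ⟨fun h => by simp [block, h] at hx, (hblock i hx).2⟩
    · exact .inr hx

namespace SimpleGraph

variable {V : Type*} (G : SimpleGraph V)

theorem indepFinset_union_iff [DecidableEq V] {s t : Finset V} :
    IndepFinset G (s ∪ t) ↔
      IndepFinset G s ∧ IndepFinset G t ∧ ∀ a ∈ s, ∀ b ∈ t, ¬ G.Adj a b := by
  simp only [IndepFinset, mem_union]
  refine ⟨fun h => ⟨fun a ha b hb => h a (.inl ha) b (.inl hb),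
    fun a ha b hb => h a (.inr ha) b (.inr hb), fun a ha b hb => h a (.inl ha) b (.inr hb)⟩, ?_⟩
  rintro ⟨hs, ht, hst⟩ a (ha | ha) b (hb | hb)
  exacts [hs a ha b hb, hst a ha b hb, fun hab => hst b hb a ha hab.symm, ht a ha b hb]

variable [DecidableRel G.Adj]

def indepSubsets (S : Finset V) : Finset (Finset V) :=
  S.powerset.filter (IndepFinset G)

theorem mem_indepSubsets {S I : Finset V} :
    I ∈ G.indepSubsets S ↔ I ⊆ S ∧ IndepFinset G I := by
  simp [indepSubsets]

theorem sum_indepSubsets_eq_sum_sum [DecidableEq V] {R : Type*} [AddCommMonoid R]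
    (S M : Finset V) (g : Finset V → R) :
    ∑ I ∈ G.indepSubsets S, g I =
      ∑ J ∈ G.indepSubsets (S \ M),
        ∑ A ∈ (S ∩ M).powerset.filter (fun A => IndepFinset G (J ∪ A)), g (J ∪ A) := by
  rw [sum_sigma']
  refine sum_nbij' (fun I => ⟨I \ M, I ∩ M⟩) (fun p => p.1 ∪ p.2) ?_ ?_ ?_ ?_ ?_
  · intro I hI
    simp only [mem_indepSubsets] at hI
    simp only [mem_sigma, mem_indepSubsets, mem_filter, mem_powerset, sdiff_union_inter]
    refine ⟨⟨sdiff_subset_sdiff hI.1 subset_rfl, fun a ha b hb => hI.2 a ?_ b ?_⟩,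
      inter_subset_inter_right hI.1, hI.2⟩
    exacts [(mem_sdiff.mp ha).1, (mem_sdiff.mp hb).1]
  · rintro ⟨J, A⟩ hp
    simp only [mem_sigma, mem_indepSubsets, mem_filter, mem_powerset] at hp ⊢
    exact ⟨union_subset (hp.1.1.trans sdiff_subset) (hp.2.1.trans inter_subset_left), hp.2.2⟩
  · intro I _
    simp [sdiff_union_inter]
  · rintro ⟨J, A⟩ hp
    simp only [mem_sigma, mem_indepSubsets, mem_filter, mem_powerset] at hp
    have hJ : Disjoint J M := disjoint_of_subset_left hp.1.1 sdiff_disjoint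
    have hA : A ⊆ M := hp.2.1.trans inter_subset_right
    simp only [Sigma.mk.injEq, heq_eq_eq]
    constructor
    · rw [union_sdiff_distrib, sdiff_eq_empty_iff_subset.mpr hA, union_empty,
        sdiff_eq_self_of_disjoint hJ]
    · rw [union_inter_distrib_right, disjoint_iff_inter_eq_empty.mp hJ, empty_union,
        inter_eq_left.mpr hA]
  · intro I _
    simp [sdiff_union_inter]

theorem filter_indepFinset_union_closedNbhd [Fintype V] [DecidableEq V] (hG : G.CliqueFree 3)
    {S J : Finset V} {v : V} (hv : v ∈ S)
    (hJ : J ∈ G.indepSubsets (S \ insert v (G.neighborFinset v))) :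
    (S ∩ insert v (G.neighborFinset v)).powerset.filter (fun A => IndepFinset G (J ∪ A)) =
      insert {v} ((S ∩ G.neighborFinset v).filter fun u => ∀ w ∈ J, ¬ G.Adj u w).powerset := by
  rw [mem_indepSubsets] at hJ
  have hvJ : ∀ w ∈ J, ¬ G.Adj v w := fun w hw hvw =>
    (mem_sdiff.mp (hJ.1 hw)).2 (mem_insert_of_mem ((G.mem_neighborFinset v w).mpr hvw))
  ext A
  simp only [mem_filter, mem_powerset, mem_insert, G.indepFinset_union_iff, subset_iff,
    mem_inter, mem_neighborFinset]
  constructor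
  · rintro ⟨hAS, -, hA, hJA⟩
    by_cases hvA : v ∈ A
    · refine .inl (eq_singleton_iff_unique_mem.mpr ⟨hvA, fun a ha => ?_⟩)
      rcases (hAS ha).2 with rfl | hva
      exacts [rfl, absurd hva (hA v hvA a ha)]
    · refine .inr fun a ha => ⟨⟨(hAS ha).1, ?_⟩, fun w hw haw => hJA w hw a ha haw.symm⟩
      rcases (hAS ha).2 with rfl | hva
      exacts [absurd ha hvA, hva]
  · rintro (rfl | hA)
    · refine ⟨by simpa using hv, hJ.2, by simp [IndepFinset], fun w hw a ha hwa => ?_⟩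
      rw [mem_singleton.mp ha] at hwa
      exact hvJ w hw hwa.symm
    · refine ⟨fun a ha => ⟨(hA ha).1.1, .inr (hA ha).1.2⟩, hJ.2, fun a ha b hb hab => ?_,
        fun w hw a ha hwa => (hA ha).2 w hw hwa.symm⟩
      exact hG {v, a, b} (is3Clique_triple_iff.mpr ⟨(hA ha).1.2, (hA hb).1.2, hab⟩)

def partitionFn (lam : ℝ) (S : Finset V) : ℝ :=
  ∑ I ∈ G.indepSubsets S, lam ^ #I

noncomputable def hardcoreProb [DecidableEq V] (lam : ℝ) (S I : Finset V) : ℝ :=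
  if I ∈ G.indepSubsets S then lam ^ #I / G.partitionFn lam S else 0

noncomputable def occupancy [Fintype V] [DecidableEq V] (lam : ℝ) (S : Finset V) (v : V) : ℝ :=
  ∑ I, if v ∈ I then G.hardcoreProb lam S I else 0

/-- Summed over the independent subsets of `S`, this gives `Z · (β P(v ∈ I) + γ E|N(v) ∩ I| - 1)`
for the hard-core model on `S` with partition function `Z`. -/
def localWeight [Fintype V] [DecidableEq V] (β γ lam : ℝ) (v : V) (I : Finset V) : ℝ :=
  β * (if v ∈ I then lam ^ #I else 0) + γ * (#(G.neighborFinset v ∩ I) * lam ^ #I) - lam ^ #I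

section

variable {G} {lam : ℝ} {S : Finset V}

theorem partitionFn_pos (hlam : 0 ≤ lam) (S : Finset V) : 0 < G.partitionFn lam S := by
  have hempty : ∅ ∈ G.indepSubsets S := by simp [mem_indepSubsets, IndepFinset]
  have := single_le_sum (f := fun I => lam ^ #I) (fun I _ => pow_nonneg hlam #I) hempty
  exact one_pos.trans_le (by simpa [partitionFn] using this)

variable [DecidableEq V]

theorem hardcoreProb_nonneg (hlam : 0 ≤ lam) (S I : Finset V) : 0 ≤ G.hardcoreProb lam S I := by
  unfold hardcoreProb
  split_ifs
  exacts [div_nonneg (pow_nonneg hlam _) (partitionFn_pos hlam S).le, le_rfl]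

theorem mem_indepSubsets_of_hardcoreProb_ne_zero {I : Finset V}
    (h : G.hardcoreProb lam S I ≠ 0) : I ∈ G.indepSubsets S := by
  by_contra hI
  exact h (if_neg hI)

variable [Fintype V]

theorem sum_hardcoreProb (hlam : 0 ≤ lam) (S : Finset V) : ∑ I, G.hardcoreProb lam S I = 1 := by
  simp only [hardcoreProb]
  rw [sum_ite_mem, univ_inter, ← sum_div]
  exact div_self (partitionFn_pos hlam S).ne'

theorem occupancy_pos (hlam : 0 < lam) {v : V} (hv : v ∈ S) : 0 < G.occupancy lam S v := by
  have hsingle : {v} ∈ G.indepSubsets S := by simp [mem_indepSubsets, hv, IndepFinset]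
  refine sum_pos' (fun I _ => ?_) ⟨{v}, mem_univ _, ?_⟩
  · split_ifs
    exacts [hardcoreProb_nonneg hlam.le S I, le_rfl]
  · rw [if_pos (mem_singleton_self v), hardcoreProb, if_pos hsingle]
    exact div_pos (by simpa using hlam) (partitionFn_pos hlam.le S)

theorem occupancy_eq_zero {v : V} (hv : v ∉ S) : G.occupancy lam S v = 0 := by
  refine sum_eq_zero fun I _ => ?_
  split_ifs with hvI
  · by_contra h
    exact hv (((mem_indepSubsets G).mp (mem_indepSubsets_of_hardcoreProb_ne_zero h)).1 hvI)
  · rfl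

theorem occupancy_eq (v : V) :
    G.occupancy lam S v =
      (∑ I ∈ G.indepSubsets S, if v ∈ I then lam ^ #I else 0) / G.partitionFn lam S := by
  simp only [occupancy, hardcoreProb, sum_div, ite_div, zero_div]
  rw [← univ_inter (G.indepSubsets S), ← sum_ite_mem]
  refine sum_congr rfl fun I _ => ?_
  split_ifs <;> simp_all

theorem localWeight_union_add_sum_powerset {β γ : ℝ} {v : V} {J F : Finset V}
    (hJ : ∀ w ∈ J, w ∉ insert v (G.neighborFinset v)) (hF : F ⊆ G.neighborFinset v) :
    G.localWeight β γ lam v (J ∪ {v}) + ∑ A ∈ F.powerset, G.localWeight β γ lam v (J ∪ A) =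
      lam ^ #J * (β * lam - lam + γ * (#F * lam * (1 + lam) ^ (#F - 1)) - (1 + lam) ^ #F) := by
  have hvN : v ∉ G.neighborFinset v := by simp
  have hv_term : G.localWeight β γ lam v (J ∪ {v}) = lam ^ #J * (β * lam - lam) := by
    have hvJ : v ∉ J := fun h => hJ v h (mem_insert_self _ _)
    have hNJ : G.neighborFinset v ∩ (J ∪ {v}) = ∅ := by
      refine eq_empty_of_forall_notMem fun u hu => ?_
      obtain ⟨huN, hu⟩ := mem_inter.mp hu
      rcases mem_union.mp hu with huJ | huv
      exacts [hJ u huJ (mem_insert_of_mem huN), hvN (mem_singleton.mp huv ▸ huN)]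
    simp only [localWeight, hNJ, card_union_of_disjoint (disjoint_singleton_right.mpr hvJ)]
    simp
    ring
  have hA_term : ∀ A ∈ F.powerset,
      G.localWeight β γ lam v (J ∪ A) = lam ^ #J * ((γ * #A - 1) * lam ^ #A) := by
    intro A hA
    have hAN : A ⊆ G.neighborFinset v := (mem_powerset.mp hA).trans hF
    have hJA : Disjoint J A := Finset.disjoint_left.mpr fun w hw hwA =>
      hJ w hw (mem_insert_of_mem (hAN hwA))
    have hvJA : v ∉ J ∪ A := fun h => (mem_union.mp h).elim
      (fun h => hJ v h (mem_insert_self _ _)) (fun h => hvN (hAN h))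
    have hNJA : G.neighborFinset v ∩ (J ∪ A) = A := by
      rw [inter_union_distrib_left, inter_eq_right.mpr hAN,
        disjoint_iff_inter_eq_empty.mp (disjoint_of_subset_right (subset_insert _ _)
          (Finset.disjoint_left.mpr hJ)).symm, empty_union]
    simp only [localWeight, hvJA, hNJA, card_union_of_disjoint hJA, if_false]
    ring
  have hpow : ∑ A ∈ F.powerset, lam ^ #A = (1 + lam) ^ #F := by
    simpa [add_comm] using sum_pow_mul_eq_add_pow lam (1 : ℝ) F
  rw [hv_term, sum_congr rfl hA_term, ← mul_sum, ← mul_add]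
  simp only [sub_mul, one_mul, mul_assoc, sum_sub_distrib, ← mul_sum, sum_powerset_card_mul_pow,
    hpow]
  ring

theorem one_le_occupancy_add_sum_occupancy (hG : G.CliqueFree 3) {β γ : ℝ} (hlam : 0 < lam)
    (hkey : ∀ f : ℕ, lam + (1 + lam) ^ f ≤ β * lam + γ * (f * lam * (1 + lam) ^ (f - 1)))
    {v : V} (hv : v ∈ S) :
    1 ≤ β * G.occupancy lam S v + γ * ∑ u ∈ G.neighborFinset v, G.occupancy lam S u := by
  set N := G.neighborFinset v
  have hsum : ∑ u ∈ N, ∑ I ∈ G.indepSubsets S, (if u ∈ I then lam ^ #I else 0) =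
      ∑ I ∈ G.indepSubsets S, #(N ∩ I) * lam ^ #I := by
    rw [sum_comm]
    refine sum_congr rfl fun I _ => ?_
    rw [sum_ite_mem, sum_const, nsmul_eq_mul]
  suffices 0 ≤ ∑ I ∈ G.indepSubsets S, G.localWeight β γ lam v I by
    simp only [occupancy_eq, ← sum_div, ← mul_div_assoc, ← add_div]
    rw [one_le_div (G.partitionFn_pos hlam.le S), mul_sum, hsum, mul_sum, ← sum_add_distrib]
    simpa [localWeight, partitionFn, sum_sub_distrib, mul_sum] using this
  rw [G.sum_indepSubsets_eq_sum_sum S (insert v N)]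
  refine sum_nonneg fun J hJ => ?_
  set F := (S ∩ N).filter fun u => ∀ w ∈ J, ¬ G.Adj u w
  have hJN : ∀ w ∈ J, w ∉ insert v N := fun w hw =>
    (mem_sdiff.mp (((mem_indepSubsets G).mp hJ).1 hw)).2
  have hFN : F ⊆ N := (filter_subset _ _).trans inter_subset_right
  have hvF : {v} ∉ F.powerset := fun h => by
    simpa [N] using hFN (mem_powerset.mp h (mem_singleton_self v))
  rw [G.filter_indepFinset_union_closedNbhd hG hv hJ, sum_insert hvF,
    localWeight_union_add_sum_powerset hJN hFN]
  exact mul_nonneg (pow_nonneg hlam.le _) (by linarith [hkey #F])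

end

section

variable [DecidableEq V] [Fintype V]

/-- `w I` is the set of times at which the colour class `I` is in use: vertex `v` must be
covered for a total time `d v`, and only before time `b v`. -/
structure IsDemandColouring (S : Finset V) (d b : V → ℝ) (w : Finset V → Set ℝ) : Prop where
  measurableSet : ∀ I, MeasurableSet (w I)
  pairwise_disjoint : Pairwise (Disjoint on w)
  subset_Ici : ∀ I, w I ⊆ Set.Ici 0
  eq_empty : ∀ I, ¬ I ⊆ S → w I = ∅
  ofReal_le : ∀ v, ENNReal.ofReal (d v) ≤
    ∑ I, if IndepFinset G I ∧ v ∈ I then volume (w I) else 0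
  subset_Ico : ∀ v I, v ∈ I → w I ⊆ Set.Ico 0 (b v)

variable {G}

theorem isDemandColouring_empty {S : Finset V} {d b : V → ℝ} (hd : ∀ v, d v ≤ 0) :
    G.IsDemandColouring S d b fun _ => ∅ where
  measurableSet _ := .empty
  pairwise_disjoint _ _ _ := Set.disjoint_empty _
  subset_Ici _ := Set.empty_subset _
  eq_empty _ _ := rfl
  ofReal_le v := by simp [ENNReal.ofReal_eq_zero.mpr (hd v)]
  subset_Ico _ _ _ := Set.empty_subset _

theorem IsDemandColouring.prepend {S S' : Finset V} {d b d' b' : V → ℝ}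
    {w' : Finset V → Set ℝ} (hw' : G.IsDemandColouring S' d' b' w') (hS : S' ⊆ S)
    (q : Finset V → ℝ) (hq0 : ∀ I, 0 ≤ q I) (hq : ∀ I, q I ≠ 0 → I ∈ G.indepSubsets S)
    (hd : ∀ v, d v ≤ (∑ I, if v ∈ I then q I else 0) + d' v) (hb' : ∀ v, 0 ≤ b' v)
    (hb : ∀ v ∈ S, (∑ I, q I) + b' v ≤ b v) :
    ∃ w, G.IsDemandColouring S d b w := by
  obtain ⟨w, hmeas, hdisj, hnonneg, hvol, hmem⟩ := exists_prepend_Ico_blocks q hq0 w'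
    hw'.measurableSet hw'.pairwise_disjoint hw'.subset_Ici
  have hS_of_mem : ∀ {I x}, x ∈ w I → I ⊆ S := fun {I x} hx => by
    rcases hmem I x hx with h | h
    · exact ((mem_indepSubsets G).mp (hq I h.1)).1
    · by_contra hI
      rwa [hw'.eq_empty I fun h => hI (h.trans hS)] at h
  refine ⟨w, ⟨hmeas, hdisj, hnonneg, fun I hI => ?_, fun v => ?_, fun v I hvI x hx => ?_⟩⟩
  · exact Set.eq_empty_of_forall_notMem fun x hx => hI (hS_of_mem hx)
  · have hsum : ENNReal.ofReal (∑ I, if v ∈ I then q I else 0) =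
        ∑ I, if IndepFinset G I ∧ v ∈ I then ENNReal.ofReal (q I) else 0 := by
      rw [ENNReal.ofReal_sum_of_nonneg fun I _ => by split_ifs; exacts [hq0 I, le_rfl]]
      refine sum_congr rfl fun I _ => ?_
      by_cases hqI : q I = 0
      · simp [hqI]
      · simp [((mem_indepSubsets G).mp (hq I hqI)).2, apply_ite ENNReal.ofReal]
    calc ENNReal.ofReal (d v)
        ≤ ENNReal.ofReal (∑ I, if v ∈ I then q I else 0) + ENNReal.ofReal (d' v) :=
          (ENNReal.ofReal_le_ofReal (hd v)).trans ENNReal.ofReal_add_le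
      _ ≤ ∑ I, if IndepFinset G I ∧ v ∈ I then volume (w I) else 0 := by
          rw [hsum]
          refine (add_le_add le_rfl (hw'.ofReal_le v)).trans_eq ?_
          rw [← sum_add_distrib]
          refine sum_congr rfl fun I _ => ?_
          split_ifs <;> simp [hvol]
  · have hvS : v ∈ S := hS_of_mem hx hvI
    refine ⟨hnonneg I hx, ?_⟩
    rcases hmem I x hx with h | h
    · linarith [hb v hvS, hb' v]
    · linarith [(hw'.subset_Ico v I hvI h).2, hb v hvS]

theorem exists_isDemandColouring {lam β γ : ℝ} (hlam : 0 < lam) (hβ : 0 ≤ β) (hγ : 0 ≤ γ)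
    (hloc : ∀ S : Finset V, ∀ v ∈ S,
      1 ≤ β * G.occupancy lam S v + γ * ∑ u ∈ G.neighborFinset v, G.occupancy lam S u)
    (S : Finset V) (d : V → ℝ) (hd : ∀ v, 0 ≤ d v) (hdS : ∀ v ∉ S, d v = 0) :
    ∃ w, G.IsDemandColouring S d (fun v => β * d v + γ * ∑ u ∈ G.neighborFinset v, d u) w := by
  induction S using Finset.strongInduction generalizing d with
  | H S ih =>
  rcases S.eq_empty_or_nonempty with rfl | hS
  · exact ⟨_, isDemandColouring_empty fun v => (hdS v (notMem_empty v)).le⟩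
  set p := G.occupancy lam S
  -- `t` is the longest time the hard-core model on `S` can run without exceeding any demand.
  obtain ⟨a, haS, hmin⟩ := S.exists_min_image (fun v => d v / p v) hS
  set t := d a / p a
  have hpa : 0 < p a := occupancy_pos hlam haS
  have ht : 0 ≤ t := div_nonneg (hd a) hpa.le
  have htp : ∀ v, t * p v ≤ d v := fun v => by
    by_cases hv : v ∈ S
    · exact (le_div_iff₀ (occupancy_pos hlam hv)).mp (hmin v hv)
    · simp [p, occupancy_eq_zero hv, hd v]
  obtain ⟨w', hw'⟩ := ih (S.erase a) (erase_ssubset haS) (fun v => d v - t * p v)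
    (fun v => sub_nonneg.mpr (htp v)) fun v hv => by
      by_cases hva : v = a
      · simp [hva, t, hpa.ne']
      · simp [p, occupancy_eq_zero (fun h => hv (mem_erase.mpr ⟨hva, h⟩)),
          hdS v fun h => hv (mem_erase.mpr ⟨hva, h⟩)]
  refine hw'.prepend (erase_subset a S) (fun I => t * G.hardcoreProb lam S I)
    (fun I => mul_nonneg ht (hardcoreProb_nonneg hlam.le S I))
    (fun I hI => mem_indepSubsets_of_hardcoreProb_ne_zero (right_ne_zero_of_mul hI))
    (fun v => ?_) (fun v => ?_) (fun v hv => ?_)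
  · have : ∑ I, (if v ∈ I then t * G.hardcoreProb lam S I else 0) = t * p v := by
      simp only [p, occupancy, mul_sum, mul_ite, mul_zero]
    linarith
  · exact add_nonneg (mul_nonneg hβ (sub_nonneg.mpr (htp v)))
      (mul_nonneg hγ (sum_nonneg fun u _ => sub_nonneg.mpr (htp u)))
  · rw [← mul_sum, sum_hardcoreProb hlam.le, mul_one, sum_sub_distrib, ← mul_sum]
    linarith [mul_le_mul_of_nonneg_left (hloc S v hv) ht]

end

end SimpleGraph

theorem add_one_add_pow_le_of_threshold {lam : ℝ} (hlam : 0 < lam) {f₀ : ℕ} (hf₀ : 0 < f₀)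
    (f : ℕ) :
    lam + (1 + lam) ^ f ≤ (1 + (1 + lam) ^ f₀ / lam) * lam +
      (1 + lam) ^ 2 / (lam * f₀) * (f * lam * (1 + lam) ^ (f - 1)) := by
  have hβ : (1 + (1 + lam) ^ f₀ / lam) * lam = lam + (1 + lam) ^ f₀ := by field_simp
  rcases le_or_gt f f₀ with hf | hf
  · have : (1 + lam) ^ f ≤ (1 + lam) ^ f₀ := pow_le_pow_right₀ (by linarith) hf
    have : 0 ≤ (1 + lam) ^ 2 / (lam * f₀) * (f * lam * (1 + lam) ^ (f - 1)) := by positivity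
    linarith
  · have hf' : (f₀ : ℝ) < f := by exact_mod_cast hf
    have hsucc : (1 + lam) ^ 2 * (1 + lam) ^ (f - 1) = (1 + lam) * (1 + lam) ^ f := by
      rw [← pow_add, ← pow_succ']
      congr 1
      omega
    have hγ : (1 + lam) ^ 2 / (lam * f₀) * (f * lam * (1 + lam) ^ (f - 1)) =
        (1 + lam) * (1 + lam) ^ f * (f / f₀) := by
      rw [← hsucc]
      field_simp
    have hratio : 1 ≤ (f : ℝ) / f₀ := (one_le_div (by exact_mod_cast hf₀)).mpr hf'.le
    have hgrow : (1 + lam) ^ f ≤ (1 + lam) * (1 + lam) ^ f * (f / f₀) :=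
      calc (1 + lam) ^ f ≤ (1 + lam) * (1 + lam) ^ f :=
            le_mul_of_one_le_left (by positivity) (by linarith)
        _ ≤ _ := le_mul_of_one_le_right (by positivity) hratio
    rw [hβ, hγ]
    linarith [pow_nonneg (by linarith : (0 : ℝ) ≤ 1 + lam) f₀]

theorem one_add_pow_le_mul_rpow {lam y : ℝ} (hlam0 : 0 < lam) (hlam1 : lam ≤ 1 / 4) (hy : 1 ≤ y)
    {n : ℕ} (hn : (n : ℝ) ≤ (1 + lam / 4) * log y / lam + 1) :
    (1 + lam) ^ n ≤ (1 + lam) * y ^ (1 - lam / 12) := by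
  have hL : 0 ≤ log y := log_nonneg hy
  have hexp : log (1 + lam) * ((1 + lam / 4) * log y / lam) ≤ (1 - lam / 12) * log y :=
    calc log (1 + lam) * ((1 + lam / 4) * log y / lam)
        ≤ (lam - lam ^ 2 / 3) * ((1 + lam / 4) * log y / lam) :=
          mul_le_mul_of_nonneg_right (log_one_add_le_sub_sq_div_three hlam0.le hlam1)
            (by positivity)
      _ = (1 - lam / 3) * (1 + lam / 4) * log y := by field_simp
      _ ≤ (1 - lam / 12) * log y := mul_le_mul_of_nonneg_right (by nlinarith) hL
  calc (1 + lam) ^ n = (1 + lam) ^ (n : ℝ) := (rpow_natCast _ _).symm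
    _ ≤ (1 + lam) ^ ((1 + lam / 4) * log y / lam + 1) :=
        rpow_le_rpow_of_exponent_le (by linarith) hn
    _ = (1 + lam) * exp (log (1 + lam) * ((1 + lam / 4) * log y / lam)) := by
        rw [rpow_add (by linarith), rpow_one, rpow_def_of_pos (by linarith), mul_comm]
    _ ≤ (1 + lam) * exp ((1 - lam / 12) * log y) := by gcongr
    _ = (1 + lam) * y ^ (1 - lam / 12) := by
        rw [rpow_def_of_pos (by linarith), mul_comm (log y)]

theorem eventually_log_mul_one_add_rpow_le {a : ℝ} (ha : 0 < a) (C : ℝ) {c : ℝ} (hc : 0 < c) :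
    ∀ᶠ y in atTop, log y * (1 + C * y ^ (1 - a)) ≤ c * y := by
  have hrpow : (fun y => log y * y ^ (1 - a)) =o[atTop] id := by
    refine ((isLittleO_log_rpow_atTop ha).mul_isBigO (isBigO_refl _ _)).congr' .rfl ?_
    filter_upwards [eventually_gt_atTop 0] with y hy
    rw [← rpow_add hy, add_sub_cancel, rpow_one, id]
  have hsum : (fun y => log y * (1 + C * y ^ (1 - a))) =o[atTop] id := by
    refine (isLittleO_log_id_atTop.add (hrpow.const_mul_left C)).congr_left fun y => ?_
    ring
  filter_upwards [hsum.def hc, eventually_ge_atTop 0] with y hy hy0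
  simpa [abs_of_nonneg hy0] using (le_abs_self _).trans hy

theorem eventually_exists_occupancy_params {ε : ℝ} (hε : 0 < ε) :
    ∀ᶠ Δ : ℕ in atTop, ∃ lam β γ : ℝ, 0 < lam ∧ 0 ≤ β ∧ 0 ≤ γ ∧
      (∀ f : ℕ, lam + (1 + lam) ^ f ≤ β * lam + γ * (f * lam * (1 + lam) ^ (f - 1))) ∧
      β + γ * Δ ≤ (1 + ε) * Δ / log Δ := by
  set lam := min ε 1 / 8 with hlam_def
  have hlam0 : 0 < lam := by positivity
  have hlam1 : lam ≤ 1 / 8 := by linarith [min_le_right ε 1]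
  have hlamε : 8 * lam ≤ ε := by linarith [min_le_left ε 1]
  filter_upwards [tendsto_natCast_atTop_atTop.eventually (eventually_log_mul_one_add_rpow_le
      (a := lam / 12) (by positivity) ((1 + lam) / lam) (c := ε / 2) (by positivity)),
    tendsto_natCast_atTop_atTop.eventually (eventually_gt_atTop (1 : ℝ))] with Δ hgrowth hΔ
  set L := log Δ
  have hL : 0 < L := log_pos hΔ
  set f₀ := ⌈(1 + lam / 4) * L / lam⌉₊
  have hf₀ : (1 + lam / 4) * L / lam ≤ f₀ := Nat.le_ceil _
  have hf₀pos : 0 < f₀ := Nat.lt_ceil.mpr (by simpa using by positivity)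
  refine ⟨lam, 1 + (1 + lam) ^ f₀ / lam, (1 + lam) ^ 2 / (lam * f₀), hlam0, by positivity,
    by positivity, add_one_add_pow_le_of_threshold hlam0 hf₀pos, ?_⟩
  have hβ : 1 + (1 + lam) ^ f₀ / lam ≤ ε / 2 * Δ / L := by
    have hpow := one_add_pow_le_mul_rpow hlam0 (by linarith) hΔ.le
      (n := f₀) (Nat.ceil_lt_add_one (by positivity)).le
    rw [le_div_iff₀ hL]
    calc (1 + (1 + lam) ^ f₀ / lam) * L
        ≤ L * (1 + (1 + lam) / lam * (Δ : ℝ) ^ (1 - lam / 12)) := by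
          rw [mul_comm]
          gcongr
          rw [div_mul_eq_mul_div]
          gcongr
      _ ≤ ε / 2 * Δ := hgrowth
  have hγ : (1 + lam) ^ 2 / (lam * f₀) * Δ ≤ (1 + ε / 2) * Δ / L := by
    have hlf₀ : L ≤ lam * f₀ := by
      rw [div_le_iff₀' hlam0] at hf₀
      nlinarith
    calc (1 + lam) ^ 2 / (lam * f₀) * Δ ≤ (1 + ε / 2) / L * Δ := by
          gcongr
          nlinarith
      _ = (1 + ε / 2) * Δ / L := by ring
  calc 1 + (1 + lam) ^ f₀ / lam + (1 + lam) ^ 2 / (lam * f₀) * Δ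
      ≤ ε / 2 * Δ / L + (1 + ε / 2) * Δ / L := add_le_add hβ hγ
    _ = (1 + ε) * Δ / L := by ring

/-- Fractional Molloy theorem: for every `ε > 0` and sufficiently large `Δ`, every
triangle-free graph of maximum degree at most `Δ` has a fractional colouring assigning
each vertex a subset of `[0, (1+ε)Δ/log Δ)`; in particular its fractional chromatic
number is at most `(1+ε)Δ/log Δ`. -/
theorem fractional_molloy (ε : ℝ) (hε : 0 < ε) :
    ∃ Δ₀ : ℕ, ∀ Δ : ℕ, Δ₀ ≤ Δ →
      ∀ (V : Type) [Fintype V] [DecidableEq V] (G : SimpleGraph V) [DecidableRel G.Adj],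
        G.CliqueFree 3 →
        (∀ v : V, G.degree v ≤ Δ) →
        ∃ w : Finset V → Set ℝ,
          (∀ I : Finset V, IndepFinset G I → MeasurableSet (w I)) ∧
          (∀ I J : Finset V, IndepFinset G I → IndepFinset G J → I ≠ J →
            Disjoint (w I) (w J)) ∧
          (∀ v : V,
            1 ≤ ∑ I : Finset V,
              if IndepFinset G I ∧ v ∈ I then MeasureTheory.volume (w I) else 0) ∧
          (∀ v : V, ∀ I : Finset V, IndepFinset G I → v ∈ I →
            w I ⊆ Set.Ico (0 : ℝ) ((1 + ε) * (Δ : ℝ) / Real.log Δ)) := by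
  obtain ⟨Δ₀, hΔ₀⟩ := eventually_atTop.mp (eventually_exists_occupancy_params hε)
  refine ⟨Δ₀, fun Δ hΔ V _ _ G _ hG hdeg => ?_⟩
  obtain ⟨lam, β, γ, hlam, hβ, hγ, hkey, hbudget⟩ := hΔ₀ Δ hΔ
  obtain ⟨w, hw⟩ := G.exists_isDemandColouring hlam hβ hγ
    (fun S v hv => SimpleGraph.one_le_occupancy_add_sum_occupancy hG hlam hkey hv) univ 1
    (fun _ => zero_le_one) (by simp)
  refine ⟨w, fun I _ => hw.measurableSet I, fun I J _ _ hIJ => hw.pairwise_disjoint hIJ,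
    fun v => by simpa using hw.ofReal_le v, fun v I _ hvI =>
      (hw.subset_Ico v I hvI).trans (Set.Ico_subset_Ico_right ?_)⟩
  calc β * 1 + γ * ∑ u ∈ G.neighborFinset v, 1 = β + γ * G.degree v := by simp
    _ ≤ β + γ * Δ := by gcongr; exact_mod_cast hdeg v
    _ ≤ (1 + ε) * Δ / log Δ := hbudget
end
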